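/- arXiv:math/9803153 — 6 statements merged into one kernel-verified Lean document; each statement's English description precedes it below -/
import Mathlib

section
/- Let X, Y : [0,1] → B(E) be families of bounded operators, with X continuously differentiable and Y norm-continuous, solving the commutator equation [P'(s), P(s)] = [H(s), X(s)] + Y(s) for every s ∈ [0,1]. Then for every s ∈ [0,1], ‖(U_τ(s) − U_A(s)) P(0)‖ ≤ sup_{u∈[0,1]} ‖Y(u)‖ + (2 + 2D)/τ · (sup_{u∈[0,1]} ‖X(u)‖ + sup_{u∈[0,1]} ‖X'(u)‖). -/
open Set

section Stmt0Aux

variable {E : Type*} [NormedAddCommGroup E] [InnerProductSpace ℂ E] [CompleteSpace E]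

private lemma stmt0_hasDerivWithinAt_star {f : ℝ → E →L[ℂ] E} {f' : E →L[ℂ] E} {s : Set ℝ}
    {x : ℝ} (hf : HasDerivWithinAt f f' s x) :
    HasDerivWithinAt (fun t => star (f t)) (star f') s x := by
  have := ((starL' ℝ (A := E →L[ℂ] E)).toContinuousLinearMap.hasFDerivAt
    (x := f x)).comp_hasDerivWithinAt x hf
  simpa [Function.comp_def] using this

private lemma stmt0_le_biSup_Icc {f : ℝ → ℝ} {C : ℝ} (hC : ∀ u ∈ Icc (0:ℝ) 1, f u ≤ C) :
    ∀ u ∈ Icc (0:ℝ) 1, f u ≤ ⨆ v ∈ Icc (0:ℝ) 1, f v := by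
  have hbdd : BddAbove (Set.range fun v => ⨆ _ : v ∈ Icc (0:ℝ) 1, f v) := by
    refine ⟨max C 0, ?_⟩
    rintro x ⟨v, rfl⟩
    show (⨆ _ : v ∈ Icc (0:ℝ) 1, f v) ≤ max C 0
    by_cases hv : v ∈ Icc (0:ℝ) 1
    · rw [ciSup_pos (f := fun _ => f v) hv]; exact le_max_of_le_left (hC v hv)
    · haveI : IsEmpty (v ∈ Icc (0:ℝ) 1) := ⟨hv⟩
      rw [Real.iSup_of_isEmpty]
      exact le_max_right _ _
  intro u hu
  calc f u = ⨆ _ : u ∈ Icc (0:ℝ) 1, f u := (ciSup_pos (f := fun _ => f u) hu).symm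
    _ ≤ _ := le_ciSup hbdd u

end Stmt0Aux

set_option maxHeartbeats 2000000

/-- Context: `E` a complex Hilbert space, `H(s)` self-adjoint nonnegative
bounded operators depending norm-continuously on `s ∈ [0,1]`, `P(s)` a continuously
differentiable family of orthogonal projections with `H(s)P(s) = 0` and `‖P'(s)‖ ≤ D`,
`τ > 0`, `U_τ` the Schrödinger evolution (`i U_τ' = τ H U_τ`, `U_τ(0) = 1`, unitary) and
`U_A` Kato's adiabatic evolution (`U_A' = [P',P] U_A`, `U_A(0) = 1`, unitary).
If `X, Y : [0,1] → B(E)` solve the commutator equation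
`[P'(s), P(s)] = [H(s), X(s)] + Y(s)` with `X` continuously differentiable and `Y`
norm-continuous, then for every `s ∈ [0,1]`,
`‖(U_τ(s) − U_A(s)) P(0)‖ ≤ sup ‖Y‖ + (2 + 2D)/τ · (sup ‖X‖ + sup ‖X'‖)`. -/
theorem stmt_0
    {E : Type*} [NormedAddCommGroup E] [InnerProductSpace ℂ E] [CompleteSpace E]
    (D τ : ℝ) (hτ : 0 < τ)
    (H P P' Uτ Uτ' UA X X' Y : ℝ → E →L[ℂ] E)
    (hH_sa : ∀ s ∈ Icc (0:ℝ) 1, IsSelfAdjoint (H s))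
    (hH_pos : ∀ s ∈ Icc (0:ℝ) 1, (H s).IsPositive)
    (hH_cont : ContinuousOn H (Icc (0:ℝ) 1))
    (hP_sa : ∀ s ∈ Icc (0:ℝ) 1, IsSelfAdjoint (P s))
    (hP_idem : ∀ s ∈ Icc (0:ℝ) 1, P s * P s = P s)
    (hP_deriv : ∀ s ∈ Icc (0:ℝ) 1, HasDerivWithinAt P (P' s) (Icc (0:ℝ) 1) s)
    (hP'_cont : ContinuousOn P' (Icc (0:ℝ) 1))
    (hHP : ∀ s ∈ Icc (0:ℝ) 1, H s * P s = 0)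
    (hD : ∀ s ∈ Icc (0:ℝ) 1, ‖P' s‖ ≤ D)
    (hUτ0 : Uτ 0 = 1)
    (hUτ_un : ∀ s ∈ Icc (0:ℝ) 1, Uτ s ∈ unitary (E →L[ℂ] E))
    (hUτ_deriv : ∀ s ∈ Icc (0:ℝ) 1, HasDerivWithinAt Uτ (Uτ' s) (Icc (0:ℝ) 1) s)
    (hUτ_ode : ∀ s ∈ Icc (0:ℝ) 1, Complex.I • Uτ' s = (τ : ℂ) • (H s * Uτ s))
    (hUA0 : UA 0 = 1)
    (hUA_un : ∀ s ∈ Icc (0:ℝ) 1, UA s ∈ unitary (E →L[ℂ] E))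
    (hUA_deriv : ∀ s ∈ Icc (0:ℝ) 1,
      HasDerivWithinAt UA ((P' s * P s - P s * P' s) * UA s) (Icc (0:ℝ) 1) s)
    (hX_deriv : ∀ s ∈ Icc (0:ℝ) 1, HasDerivWithinAt X (X' s) (Icc (0:ℝ) 1) s)
    (hX'_cont : ContinuousOn X' (Icc (0:ℝ) 1))
    (hY_cont : ContinuousOn Y (Icc (0:ℝ) 1))
    (hcomm : ∀ s ∈ Icc (0:ℝ) 1,
      P' s * P s - P s * P' s = (H s * X s - X s * H s) + Y s) :
    ∀ s ∈ Icc (0:ℝ) 1,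
      ‖(Uτ s - UA s) * P 0‖ ≤
        (⨆ u ∈ Icc (0:ℝ) 1, ‖Y u‖) +
          (2 + 2 * D) / τ *
            ((⨆ u ∈ Icc (0:ℝ) 1, ‖X u‖) + ⨆ u ∈ Icc (0:ℝ) 1, ‖X' u‖) := by
  have h01 : (0:ℝ) ∈ Icc (0:ℝ) 1 := left_mem_Icc.mpr zero_le_one
  have uD : UniqueDiffOn ℝ (Icc (0:ℝ) 1) := uniqueDiffOn_Icc one_pos
  have hD0 : 0 ≤ D := le_trans (norm_nonneg _) (hD 0 h01)
  have hτC : (τ:ℂ) ≠ 0 := by exact_mod_cast hτ.ne'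
  -- norm of projections
  have hPnorm : ∀ s ∈ Icc (0:ℝ) 1, ‖P s‖ ≤ 1 := by
    intro s hs
    have h := CStarRing.norm_star_mul_self (x := P s)
    rw [(hP_sa s hs).star_eq, hP_idem s hs] at h
    nlinarith [norm_nonneg (P s)]
  -- P' self-adjoint
  have hP'_sa : ∀ s ∈ Icc (0:ℝ) 1, star (P' s) = P' s := by
    intro s hs
    have h1 : HasDerivWithinAt (fun t => star (P t)) (star (P' s)) (Icc (0:ℝ) 1) s :=
      stmt0_hasDerivWithinAt_star (hP_deriv s hs)
    have h2 : HasDerivWithinAt P (star (P' s)) (Icc (0:ℝ) 1) s :=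
      h1.congr (fun y hy => ((hP_sa y hy).star_eq).symm) ((hP_sa s hs).star_eq).symm
    exact (h2.derivWithin (uD s hs)).symm.trans ((hP_deriv s hs).derivWithin (uD s hs))
  -- Leibniz
  have hLeib : ∀ s ∈ Icc (0:ℝ) 1, P' s = P' s * P s + P s * P' s := by
    intro s hs
    have h1 : HasDerivWithinAt (fun t => P t * P t) (P' s * P s + P s * P' s)
        (Icc (0:ℝ) 1) s := (hP_deriv s hs).mul (hP_deriv s hs)
    have h2 : HasDerivWithinAt P (P' s * P s + P s * P' s) (Icc (0:ℝ) 1) s :=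
      h1.congr (fun y hy => (hP_idem y hy).symm) (hP_idem s hs).symm
    exact ((hP_deriv s hs).derivWithin (uD s hs)).symm.trans (h2.derivWithin (uD s hs))
  have hPP'P : ∀ s ∈ Icc (0:ℝ) 1, P s * P' s * P s = 0 := by
    intro s hs
    have h := congrArg (fun z => P s * z) (hLeib s hs)
    have h2 : P s * (P' s * P s + P s * P' s) = P s * P' s * P s + P s * P' s := by
      rw [mul_add, ← mul_assoc, ← mul_assoc, hP_idem s hs]
    rw [h2] at h
    exact right_eq_add.mp h
  -- Kato intertwining
  have hInt : ∀ s ∈ Icc (0:ℝ) 1, UA s * P 0 = P s * UA s := by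
    have hF' : ∀ s ∈ Icc (0:ℝ) 1,
        HasDerivWithinAt (fun t => star (UA t) * (P t * UA t)) 0 (Icc (0:ℝ) 1) s := by
      intro s hs
      have hSA := stmt0_hasDerivWithinAt_star (hUA_deriv s hs)
      have hinner : HasDerivWithinAt (fun t => P t * UA t)
          (P' s * UA s + P s * ((P' s * P s - P s * P' s) * UA s)) (Icc (0:ℝ) 1) s :=
        (hP_deriv s hs).mul (hUA_deriv s hs)
      have h := hSA.mul hinner
      have hstar : star ((P' s * P s - P s * P' s) * UA s)
          = star (UA s) * (P s * P' s - P' s * P s) := by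
        rw [star_mul]
        congr 1
        rw [star_sub, star_mul, star_mul, hP'_sa s hs, (hP_sa s hs).star_eq]
      rw [hstar] at h
      have key : star (UA s) * (P s * P' s - P' s * P s) * (P s * UA s)
          + star (UA s) * (P' s * UA s + P s * ((P' s * P s - P s * P' s) * UA s)) = 0 := by
        have e : star (UA s) * (P s * P' s - P' s * P s) * (P s * UA s)
            + star (UA s) * (P' s * UA s + P s * ((P' s * P s - P s * P' s) * UA s))
            = star (UA s) * (((P s * P' s * P s + P s * P' s * P s)
                + (P' s - (P' s * (P s * P s) + (P s * P s) * P' s))) * UA s) := by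
          noncomm_ring
        rw [e, hP_idem s hs, hPP'P s hs, ← hLeib s hs]
        simp
      rw [key] at h
      exact h
    have hconst : ∀ x ∈ Icc (0:ℝ) 1,
        star (UA x) * (P x * UA x) = star (UA 0) * (P 0 * UA 0) := by
      intro x hx
      have hb := norm_image_sub_le_of_norm_deriv_le_segment'
        (f' := fun _ => (0 : E →L[ℂ] E)) (C := 0) hF' (fun u _ => by simp) x hx
      have h0 : ‖star (UA x) * (P x * UA x) - star (UA 0) * (P 0 * UA 0)‖ ≤ 0 := by
        simpa using hb
      have := le_antisymm h0 (norm_nonneg _)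
      rwa [norm_eq_zero, sub_eq_zero] at this
    intro s hs
    have h := hconst s hs
    rw [hUA0] at h
    simp only [star_one, one_mul, mul_one] at h
    have hu := Unitary.mem_iff.mp (hUA_un s hs)
    calc UA s * P 0 = UA s * (star (UA s) * (P s * UA s)) := by rw [h]
      _ = (UA s * star (UA s)) * (P s * UA s) := by rw [mul_assoc]
      _ = P s * UA s := by rw [hu.2, one_mul]
  -- H kills UA * P 0
  have hHUAP : ∀ s ∈ Icc (0:ℝ) 1, H s * (UA s * P 0) = 0 := by
    intro s hs
    rw [hInt s hs, ← mul_assoc, hHP s hs, zero_mul]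
  -- formula for Uτ'
  have hUτ'_eq : ∀ s ∈ Icc (0:ℝ) 1, Uτ' s = (-(τ:ℂ) * Complex.I) • (H s * Uτ s) := by
    intro s hs
    have h := congrArg (fun z => (-Complex.I) • z) (hUτ_ode s hs)
    simp only [smul_smul] at h
    rw [neg_mul, Complex.I_mul_I, neg_neg, one_smul] at h
    rw [h]
    congr 1
    ring
  -- derivative of star Uτ
  have hSU' : ∀ s ∈ Icc (0:ℝ) 1, HasDerivWithinAt (fun t => star (Uτ t))
      (((τ:ℂ) * Complex.I) • (star (Uτ s) * H s)) (Icc (0:ℝ) 1) s := by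
    intro s hs
    have h := stmt0_hasDerivWithinAt_star (hUτ_deriv s hs)
    have heq : star (Uτ' s) = ((τ:ℂ) * Complex.I) • (star (Uτ s) * H s) := by
      rw [hUτ'_eq s hs, star_smul,
        show star (H s * Uτ s) = star (Uτ s) * H s by rw [star_mul, (hH_sa s hs).star_eq]]
      congr 1
      simp [Complex.ext_iff]
    rwa [heq] at h
  -- derivative of UA * P 0
  have hUAP' : ∀ s ∈ Icc (0:ℝ) 1, HasDerivWithinAt (fun t => UA t * P 0)
      ((P' s * P s - P s * P' s) * UA s * P 0) (Icc (0:ℝ) 1) s :=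
    fun s hs => (hUA_deriv s hs).mul_const (P 0)
  -- the function φ and its derivative R
  have hφ' : ∀ s ∈ Icc (0:ℝ) 1,
      HasDerivWithinAt
        (fun t => star (Uτ t) * (UA t * P 0)
          + (Complex.I / (τ:ℂ)) • (star (Uτ t) * (X t * (UA t * P 0))))
        (star (Uτ s) * (Y s * (UA s * P 0))
          + (Complex.I / (τ:ℂ)) • (star (Uτ s) * (X' s * (UA s * P 0))
              + star (Uτ s) * (X s * ((P' s * P s - P s * P' s) * UA s * P 0))))
        (Icc (0:ℝ) 1) s := by
    intro s hs
    have hg := (hSU' s hs).mul (hUAP' s hs)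
    have hXUAP : HasDerivWithinAt (fun t => X t * (UA t * P 0))
        (X' s * (UA s * P 0) + X s * ((P' s * P s - P s * P' s) * UA s * P 0))
        (Icc (0:ℝ) 1) s := (hX_deriv s hs).mul (hUAP' s hs)
    have hK := (hSU' s hs).mul hXUAP
    have h := hg.add (hK.const_smul (Complex.I / (τ:ℂ)))
    have hz : H s * (UA s * P 0) = 0 := hHUAP s hs
    have e1 : (((τ:ℂ) * Complex.I) • (star (Uτ s) * H s)) * (UA s * P 0) = 0 := by
      rw [smul_mul_assoc, mul_assoc, hz, mul_zero, smul_zero]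
    have e2 : star (Uτ s) * ((P' s * P s - P s * P' s) * UA s * P 0)
        = star (Uτ s) * ((H s * X s) * (UA s * P 0))
          + star (Uτ s) * (Y s * (UA s * P 0)) := by
      rw [hcomm s hs]
      have e2a : (H s * X s - X s * H s + Y s) * UA s * P 0
          = (H s * X s) * (UA s * P 0) - X s * (H s * (UA s * P 0))
            + Y s * (UA s * P 0) := by
        noncomm_ring
      rw [e2a, hz, mul_zero, sub_zero, mul_add]
    have hsc2 : Complex.I / (τ:ℂ) * ((τ:ℂ) * Complex.I) = -1 := by
      have h1 : Complex.I / (τ:ℂ) * ((τ:ℂ) * Complex.I)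
          = (Complex.I * Complex.I) * ((τ:ℂ) / (τ:ℂ)) := by ring
      rw [h1, div_self hτC, mul_one, Complex.I_mul_I]
    have e3 : (Complex.I / (τ:ℂ)) •
          ((((τ:ℂ) * Complex.I) • (star (Uτ s) * H s)) * (X s * (UA s * P 0)))
        = - (star (Uτ s) * ((H s * X s) * (UA s * P 0))) := by
      rw [smul_mul_assoc, smul_smul, hsc2, neg_one_smul]
      noncomm_ring
    have heq : ((((τ:ℂ) * Complex.I) • (star (Uτ s) * H s)) * (UA s * P 0)
          + star (Uτ s) * ((P' s * P s - P s * P' s) * UA s * P 0))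
        + (Complex.I / (τ:ℂ)) •
            ((((τ:ℂ) * Complex.I) • (star (Uτ s) * H s)) * (X s * (UA s * P 0))
              + star (Uτ s) * (X' s * (UA s * P 0)
                  + X s * ((P' s * P s - P s * P' s) * UA s * P 0)))
        = star (Uτ s) * (Y s * (UA s * P 0))
          + (Complex.I / (τ:ℂ)) • (star (Uτ s) * (X' s * (UA s * P 0))
              + star (Uτ s) * (X s * ((P' s * P s - P s * P' s) * UA s * P 0))) := by
      rw [e1, zero_add, e2, smul_add, e3, mul_add (star (Uτ s))]
      try abel
    exact heq ▸ h
  -- sups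
  set MY := ⨆ u ∈ Icc (0:ℝ) 1, ‖Y u‖ with hMYdef
  set MX := ⨆ u ∈ Icc (0:ℝ) 1, ‖X u‖ with hMXdef
  set MX' := ⨆ u ∈ Icc (0:ℝ) 1, ‖X' u‖ with hMX'def
  obtain ⟨CY, hCY⟩ := isCompact_Icc.exists_bound_of_continuousOn hY_cont
  obtain ⟨CX', hCX'⟩ := isCompact_Icc.exists_bound_of_continuousOn hX'_cont
  obtain ⟨CX, hCX⟩ := isCompact_Icc.exists_bound_of_continuousOn
    (fun u hu => (hX_deriv u hu).continuousWithinAt)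
  have hMY : ∀ u ∈ Icc (0:ℝ) 1, ‖Y u‖ ≤ MY := stmt0_le_biSup_Icc hCY
  have hMX : ∀ u ∈ Icc (0:ℝ) 1, ‖X u‖ ≤ MX := stmt0_le_biSup_Icc hCX
  have hMX' : ∀ u ∈ Icc (0:ℝ) 1, ‖X' u‖ ≤ MX' := stmt0_le_biSup_Icc hCX'
  have hMY0 : 0 ≤ MY := le_trans (norm_nonneg _) (hMY 0 h01)
  have hMX0 : 0 ≤ MX := le_trans (norm_nonneg _) (hMX 0 h01)
  have hMX'0 : 0 ≤ MX' := le_trans (norm_nonneg _) (hMX' 0 h01)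
  -- auxiliary norm facts
  have hstrip : ∀ u ∈ Icc (0:ℝ) 1, ∀ M : E →L[ℂ] E, ‖star (Uτ u) * M‖ = ‖M‖ :=
    fun u hu M => CStarRing.norm_mem_unitary_mul M (Unitary.star_mem (hUτ_un u hu))
  have hUAP0 : ∀ u ∈ Icc (0:ℝ) 1, ‖UA u * P 0‖ ≤ 1 := by
    intro u hu
    rw [CStarRing.norm_mem_unitary_mul _ (hUA_un u hu)]
    exact hPnorm 0 h01
  have hIτ : ‖Complex.I / (τ:ℂ)‖ = 1 / τ := by
    rw [norm_div, Complex.norm_I]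
    congr 1
    rw [Complex.norm_real, Real.norm_eq_abs, abs_of_pos hτ]
  have hcommN : ∀ u ∈ Icc (0:ℝ) 1, ‖P' u * P u - P u * P' u‖ ≤ 2 * D := by
    intro u hu
    calc ‖P' u * P u - P u * P' u‖ ≤ ‖P' u * P u‖ + ‖P u * P' u‖ := norm_sub_le _ _
      _ ≤ ‖P' u‖ * ‖P u‖ + ‖P u‖ * ‖P' u‖ := add_le_add (norm_mul_le _ _) (norm_mul_le _ _)
      _ ≤ D * 1 + 1 * D := add_le_add
          (mul_le_mul (hD u hu) (hPnorm u hu) (norm_nonneg _) hD0)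
          (mul_le_mul (hPnorm u hu) (hD u hu) (norm_nonneg _) zero_le_one)
      _ = 2 * D := by ring
  -- bound on R
  have hRb : ∀ u ∈ Icc (0:ℝ) 1,
      ‖star (Uτ u) * (Y u * (UA u * P 0))
        + (Complex.I / (τ:ℂ)) • (star (Uτ u) * (X' u * (UA u * P 0))
            + star (Uτ u) * (X u * ((P' u * P u - P u * P' u) * UA u * P 0)))‖
      ≤ MY + 1 / τ * (MX' + MX * (2 * D)) := by
    intro u hu
    have t1 : ‖Y u * (UA u * P 0)‖ ≤ MY :=
      le_trans (le_trans (norm_mul_le _ _)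
        (mul_le_of_le_one_right (norm_nonneg _) (hUAP0 u hu))) (hMY u hu)
    have t2 : ‖X' u * (UA u * P 0)‖ ≤ MX' :=
      le_trans (le_trans (norm_mul_le _ _)
        (mul_le_of_le_one_right (norm_nonneg _) (hUAP0 u hu))) (hMX' u hu)
    have t3 : ‖X u * ((P' u * P u - P u * P' u) * UA u * P 0)‖ ≤ MX * (2 * D) := by
      have hin : ‖(P' u * P u - P u * P' u) * UA u * P 0‖ ≤ 2 * D := by
        rw [mul_assoc]
        refine le_trans (norm_mul_le _ _) ?_
        calc ‖P' u * P u - P u * P' u‖ * ‖UA u * P 0‖ ≤ (2 * D) * 1 :=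
              mul_le_mul (hcommN u hu) (hUAP0 u hu) (norm_nonneg _) (by linarith)
          _ = 2 * D := mul_one _
      exact le_trans (norm_mul_le _ _)
        (mul_le_mul (hMX u hu) hin (norm_nonneg _) hMX0)
    calc ‖star (Uτ u) * (Y u * (UA u * P 0))
          + (Complex.I / (τ:ℂ)) • (star (Uτ u) * (X' u * (UA u * P 0))
              + star (Uτ u) * (X u * ((P' u * P u - P u * P' u) * UA u * P 0)))‖
        ≤ ‖star (Uτ u) * (Y u * (UA u * P 0))‖
          + ‖(Complex.I / (τ:ℂ)) • (star (Uτ u) * (X' u * (UA u * P 0))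
              + star (Uτ u) * (X u * ((P' u * P u - P u * P' u) * UA u * P 0)))‖ :=
          norm_add_le _ _
      _ = ‖Y u * (UA u * P 0)‖
          + 1 / τ * ‖star (Uτ u) * (X' u * (UA u * P 0))
              + star (Uτ u) * (X u * ((P' u * P u - P u * P' u) * UA u * P 0))‖ := by
          rw [hstrip u hu, norm_smul, hIτ]
      _ ≤ MY + 1 / τ * (MX' + MX * (2 * D)) := by
          have hs2 : ‖star (Uτ u) * (X' u * (UA u * P 0))
              + star (Uτ u) * (X u * ((P' u * P u - P u * P' u) * UA u * P 0))‖
              ≤ MX' + MX * (2 * D) := by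
            refine le_trans (norm_add_le _ _) ?_
            rw [hstrip u hu, hstrip u hu]
            exact add_le_add t2 t3
          have h1τ : (0:ℝ) ≤ 1 / τ := by positivity
          exact add_le_add t1 (mul_le_mul_of_nonneg_left hs2 h1τ)
  -- mean value inequality
  have hMVT := norm_image_sub_le_of_norm_deriv_le_segment'
    (C := MY + 1 / τ * (MX' + MX * (2 * D))) hφ'
    (fun u hu => hRb u (Ico_subset_Icc_self hu))
  -- conclude
  intro s hs
  have hφbound : ‖(star (Uτ s) * (UA s * P 0)
        + (Complex.I / (τ:ℂ)) • (star (Uτ s) * (X s * (UA s * P 0))))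
      - (star (Uτ 0) * (UA 0 * P 0)
        + (Complex.I / (τ:ℂ)) • (star (Uτ 0) * (X 0 * (UA 0 * P 0))))‖
      ≤ MY + 1 / τ * (MX' + MX * (2 * D)) := by
    refine le_trans (hMVT s hs) ?_
    have h1τ : (0:ℝ) ≤ 1 / τ := by positivity
    have hin0 : (0:ℝ) ≤ MX' + MX * (2 * D) := by nlinarith
    have hC0 : 0 ≤ MY + 1 / τ * (MX' + MX * (2 * D)) := by nlinarith [mul_nonneg h1τ hin0]
    nlinarith [hs.1, hs.2]
  -- K bounds
  have hKb : ∀ u ∈ Icc (0:ℝ) 1, ‖star (Uτ u) * (X u * (UA u * P 0))‖ ≤ MX := by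
    intro u hu
    rw [hstrip u hu]
    exact le_trans (le_trans (norm_mul_le _ _)
      (mul_le_of_le_one_right (norm_nonneg _) (hUAP0 u hu))) (hMX u hu)
  -- identity for the target
  have hg0 : star (Uτ 0) * (UA 0 * P 0) = P 0 := by
    rw [hUτ0, hUA0, star_one, one_mul, one_mul]
  have hkey : (Uτ s - UA s) * P 0
      = Uτ s * ((star (Uτ 0) * (UA 0 * P 0)) - star (Uτ s) * (UA s * P 0)) := by
    rw [hg0, mul_sub, ← mul_assoc, (Unitary.mem_iff.mp (hUτ_un s hs)).2, one_mul, sub_mul]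
  -- decomposition
  have hdecomp : (star (Uτ 0) * (UA 0 * P 0)) - star (Uτ s) * (UA s * P 0)
      = ((star (Uτ 0) * (UA 0 * P 0)
          + (Complex.I / (τ:ℂ)) • (star (Uτ 0) * (X 0 * (UA 0 * P 0))))
        - (star (Uτ s) * (UA s * P 0)
          + (Complex.I / (τ:ℂ)) • (star (Uτ s) * (X s * (UA s * P 0)))))
        + (Complex.I / (τ:ℂ)) • ((star (Uτ s) * (X s * (UA s * P 0)))
            - (star (Uτ 0) * (X 0 * (UA 0 * P 0)))) := by
    simp only [smul_sub]
    abel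
  have hsmulK : ‖(Complex.I / (τ:ℂ)) • ((star (Uτ s) * (X s * (UA s * P 0)))
      - (star (Uτ 0) * (X 0 * (UA 0 * P 0))))‖ ≤ 1 / τ * (MX + MX) := by
    rw [norm_smul, hIτ]
    refine mul_le_mul_of_nonneg_left ?_ (by positivity)
    exact le_trans (norm_sub_le _ _) (add_le_add (hKb s hs) (hKb 0 h01))
  calc ‖(Uτ s - UA s) * P 0‖
      = ‖(star (Uτ 0) * (UA 0 * P 0)) - star (Uτ s) * (UA s * P 0)‖ := by
        rw [hkey, CStarRing.norm_mem_unitary_mul _ (hUτ_un s hs)]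
    _ ≤ (MY + 1 / τ * (MX' + MX * (2 * D))) + 1 / τ * (MX + MX) := by
        rw [hdecomp]
        refine le_trans (norm_add_le _ _) (add_le_add ?_ hsmulK)
        rw [norm_sub_rev]
        exact hφbound
    _ ≤ MY + (2 + 2 * D) / τ * (MX + MX') := by
        have h2 : (MX' + MX * (2 * D)) + (MX + MX) ≤ (2 + 2 * D) * (MX + MX') := by
          nlinarith
        calc (MY + 1 / τ * (MX' + MX * (2 * D))) + 1 / τ * (MX + MX)
            = MY + ((MX' + MX * (2 * D)) + (MX + MX)) / τ := by ring
          _ ≤ MY + ((2 + 2 * D) * (MX + MX')) / τ := by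
              have := (div_le_div_iff_of_pos_right hτ).mpr h2
              linarith
          _ = MY + (2 + 2 * D) / τ * (MX + MX') := by ring
end

section
/- (Theorem II.1, polynomial rate.) Let μ > 0, ν ≥ 0, C, Ĉ ≥ 0, and suppose that for every ε ∈ (0,1) there exist families X_ε, Y_ε : [0,1] → B(E), with X_ε continuously differentiable and Y_ε norm-continuous, such that [P'(s), P(s)] = [H(s), X_ε(s)] + Y_ε(s), ‖X_ε(s)‖ + ‖X_ε'(s)‖ ≤ C ε^{−ν}, and ‖Y_ε(s)‖ ≤ Ĉ ε^{μ} for all s ∈ [0,1]. Then there is a constant C̃, depending only on C, Ĉ, D, μ, ν, such that for every τ ≥ 1 and every s ∈ [0,1], ‖(U_τ(s) − U_A(s)) P(0)‖ ≤ C̃ τ^{−μ/(μ+ν)}. -/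
universe u

open Set



section auxlemmas
variable {E : Type*} [NormedAddCommGroup E] [InnerProductSpace ℂ E] [CompleteSpace E]
set_option linter.unusedSectionVars false

lemma unit_norm_le (U : E →L[ℂ] E) (hU : U ∈ unitary (E →L[ℂ] E)) : ‖U‖ ≤ 1 := by
  have h1 : star U * U = 1 := hU.1
  have h2 : ‖star U * U‖ = ‖U‖ * ‖U‖ := CStarRing.norm_star_mul_self
  have h3 : ‖(1 : E →L[ℂ] E)‖ ≤ 1 := ContinuousLinearMap.norm_id_le
  nlinarith [norm_nonneg U, h1 ▸ h2]

lemma unit_mul_norm (U A : E →L[ℂ] E) (hU : U ∈ unitary (E →L[ℂ] E)) : ‖U * A‖ = ‖A‖ := by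
  refine le_antisymm ((norm_mul_le _ _).trans ?_) ?_
  · nlinarith [unit_norm_le U hU, norm_nonneg A, norm_mul_le U A]
  · have : A = star U * (U * A) := by rw [← mul_assoc, hU.1, one_mul]
    calc ‖A‖ = ‖star U * (U * A)‖ := by rw [← this]
    _ ≤ ‖star U‖ * ‖U * A‖ := norm_mul_le _ _
    _ ≤ 1 * ‖U * A‖ := by
        gcongr; exact unit_norm_le _ (Unitary.star_mem hU)
    _ = ‖U * A‖ := one_mul _

lemma proj_norm_le (P : E →L[ℂ] E) (hsa : IsSelfAdjoint P) (hP : P * P = P) : ‖P‖ ≤ 1 := by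
  have h2 : ‖star P * P‖ = ‖P‖ * ‖P‖ := CStarRing.norm_star_mul_self
  rw [hsa.star_eq, hP] at h2
  nlinarith [norm_nonneg P]

lemma nmul {A B : E →L[ℂ] E} {a b : ℝ} (hA : ‖A‖ ≤ a) (hB : ‖B‖ ≤ b) : ‖A * B‖ ≤ a * b :=
  (norm_mul_le A B).trans (mul_le_mul hA hB (norm_nonneg B) ((norm_nonneg A).trans hA))

lemma deriv_unique_Icc {f : ℝ → E →L[ℂ] E} {a b : E →L[ℂ] E} {s : ℝ} (hs : s ∈ Icc (0:ℝ) 1)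
    (h1 : HasDerivWithinAt f a (Icc (0:ℝ) 1) s) (h2 : HasDerivWithinAt f b (Icc (0:ℝ) 1) s) :
    a = b := by
  have hu : UniqueDiffWithinAt ℝ (Icc (0:ℝ) 1) s := (uniqueDiffOn_Icc one_pos) s hs
  rw [← h1.derivWithin hu, ← h2.derivWithin hu]

end auxlemmas

section ringlem
variable {A : Type*} [Ring A]

lemma lem_QRQ (Q R : A) (hQ : Q*Q = Q) (hs : R = R*Q + Q*R) : Q*(R*Q) = 0 := by
  have hRQ : R*Q = R - Q*R := eq_sub_of_add_eq hs.symm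
  rw [hRQ, mul_sub, ← mul_assoc, hQ, sub_self]

lemma lem_kato (Q R V W : A) (hQ : Q*Q = Q) (hs : R = R*Q + Q*R) :
    (V*(Q*R - R*Q)*Q + V*R)*W + (V*Q)*((R*Q - Q*R)*W) = 0 := by
  have h0 : Q*(R*Q) = 0 := lem_QRQ Q R hQ hs
  have h0l : ∀ Z : A, Q*(R*(Q*Z)) = 0 := by
    intro Z; rw [show Q*(R*(Q*Z)) = (Q*(R*Q))*Z by noncomm_ring, h0, zero_mul]
  have hQl : ∀ Z : A, Q*(Q*Z) = Q*Z := by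
    intro Z; rw [← mul_assoc, hQ]
  have hRQ : ∀ Z : A, R*(Q*Z) = R*Z - Q*(R*Z) := by
    intro Z
    rw [show R*(Q*Z) = (R*Q)*Z by rw [mul_assoc], eq_sub_of_add_eq hs.symm, sub_mul, mul_assoc]
  simp only [mul_sub, sub_mul, mul_add, add_mul, mul_assoc, hRQ, h0l, hQl, mul_zero, zero_mul]
  abel
end ringlem

lemma rate_arith (μ ν C3 Chat τ : ℝ) (hμ : 0 < μ) (hν : 0 ≤ ν) (hC3 : 0 ≤ C3)
    (hChat : 0 ≤ Chat) (hτ : 1 ≤ τ) :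
    C3 * ((2*τ) ^ (-(1/(μ+ν)))) ^ (-ν) / τ + Chat * ((2*τ) ^ (-(1/(μ+ν)))) ^ μ
      ≤ (2*C3 + Chat) * τ ^ (-(μ/(μ+ν))) := by
  have hσ : 0 < μ + ν := by linarith
  have hτ0 : (0:ℝ) < τ := by linarith
  have h2τ : (0:ℝ) < 2*τ := by linarith
  set a : ℝ := ν/(μ+ν) with ha
  set b : ℝ := μ/(μ+ν) with hb
  have hab : a - 1 = -b := by
    rw [ha, hb, eq_neg_iff_add_eq_zero, sub_add_eq_add_sub, ← add_div, add_comm ν μ,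
      div_self hσ.ne', sub_self]
  have h1 : ((2*τ) ^ (-(1/(μ+ν)))) ^ (-ν) = 2^a * τ^a := by
    rw [← Real.rpow_mul h2τ.le, show -(1/(μ+ν)) * (-ν) = a by rw [ha]; try field_simp,
      Real.mul_rpow (by norm_num) hτ0.le]
  have h2 : ((2*τ) ^ (-(1/(μ+ν)))) ^ μ = 2^(-b) * τ^(-b) := by
    rw [← Real.rpow_mul h2τ.le, show -(1/(μ+ν)) * μ = -b by rw [hb]; try field_simp; try ring,
      Real.mul_rpow (by norm_num) hτ0.le]
  have h3 : 2^a * τ^a / τ = 2^a * τ^(-b) := by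
    rw [mul_div_assoc, ← hab, Real.rpow_sub hτ0, Real.rpow_one]
  have h4 : (2:ℝ)^a ≤ 2 := by
    calc (2:ℝ)^a ≤ 2^(1:ℝ) := by
          apply Real.rpow_le_rpow_of_exponent_le one_le_two
          rw [ha]; rw [div_le_one hσ]; linarith
    _ = 2 := Real.rpow_one 2
  have h5 : (2:ℝ)^(-b) ≤ 1 := by
    apply Real.rpow_le_one_of_one_le_of_nonpos one_le_two
    simp only [hb, Left.neg_nonpos_iff]; positivity
  rw [h1, h2, mul_div_assoc, h3]
  have hτb : (0:ℝ) < τ^(-b) := Real.rpow_pos_of_pos hτ0 _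
  nlinarith [mul_nonneg hC3 hτb.le, mul_nonneg hChat hτb.le, Real.rpow_nonneg (le_of_lt hτ0) a]


set_option maxHeartbeats 4000000 in
/-- **Theorem II.1, polynomial rate.** Let `μ > 0`, `ν ≥ 0`, `C, Chat ≥ 0` and
`D ≥ 0`. Then there is a constant `Ctilde`, depending only on `C, Chat, D, μ, ν`, such that the
following holds. Let `E` be a complex Hilbert space, `H(s)` self-adjoint nonnegative
bounded operators depending norm-continuously on `s ∈ [0,1]`, `P(s)` a continuously
differentiable family of orthogonal projections with `H(s)P(s) = 0` and `‖P'(s)‖ ≤ D`,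
and `U_A` Kato's adiabatic evolution. Suppose for every `ε ∈ (0,1)` there are families
`X_ε` (continuously differentiable) and `Y_ε` (norm-continuous) with
`[P'(s),P(s)] = [H(s),X_ε(s)] + Y_ε(s)`, `‖X_ε(s)‖ + ‖X_ε'(s)‖ ≤ C ε^{−ν}` and
`‖Y_ε(s)‖ ≤ Chat ε^μ` on `[0,1]`. Then for every `τ ≥ 1` and every Schrödinger evolution
`U_τ` (`i U_τ' = τ H U_τ`, `U_τ(0) = 1`, unitary), and every `s ∈ [0,1]`,
`‖(U_τ(s) − U_A(s)) P(0)‖ ≤ Ctilde τ^{−μ/(μ+ν)}`. -/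
theorem stmt_1 (μ ν C Chat D : ℝ) (hμ : 0 < μ) (hν : 0 ≤ ν) (hC : 0 ≤ C) (hChat : 0 ≤ Chat)
    (hD : 0 ≤ D) :
    ∃ Ctilde : ℝ,
      ∀ (E : Type u) [NormedAddCommGroup E] [InnerProductSpace ℂ E] [CompleteSpace E],
      ∀ H P P' UA : ℝ → E →L[ℂ] E,
        (∀ s ∈ Icc (0:ℝ) 1, IsSelfAdjoint (H s)) →
        (∀ s ∈ Icc (0:ℝ) 1, (H s).IsPositive) →
        ContinuousOn H (Icc (0:ℝ) 1) →
        (∀ s ∈ Icc (0:ℝ) 1, IsSelfAdjoint (P s)) →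
        (∀ s ∈ Icc (0:ℝ) 1, P s * P s = P s) →
        (∀ s ∈ Icc (0:ℝ) 1, HasDerivWithinAt P (P' s) (Icc (0:ℝ) 1) s) →
        ContinuousOn P' (Icc (0:ℝ) 1) →
        (∀ s ∈ Icc (0:ℝ) 1, H s * P s = 0) →
        (∀ s ∈ Icc (0:ℝ) 1, ‖P' s‖ ≤ D) →
        UA 0 = 1 →
        (∀ s ∈ Icc (0:ℝ) 1, UA s ∈ unitary (E →L[ℂ] E)) →
        (∀ s ∈ Icc (0:ℝ) 1,
          HasDerivWithinAt UA ((P' s * P s - P s * P' s) * UA s) (Icc (0:ℝ) 1) s) →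
        (∀ ε ∈ Ioo (0:ℝ) 1, ∃ X X' Y : ℝ → E →L[ℂ] E,
          (∀ s ∈ Icc (0:ℝ) 1, HasDerivWithinAt X (X' s) (Icc (0:ℝ) 1) s) ∧
          ContinuousOn X' (Icc (0:ℝ) 1) ∧
          ContinuousOn Y (Icc (0:ℝ) 1) ∧
          (∀ s ∈ Icc (0:ℝ) 1,
            P' s * P s - P s * P' s = (H s * X s - X s * H s) + Y s) ∧
          (∀ s ∈ Icc (0:ℝ) 1, ‖X s‖ + ‖X' s‖ ≤ C * ε ^ (-ν)) ∧
          (∀ s ∈ Icc (0:ℝ) 1, ‖Y s‖ ≤ Chat * ε ^ μ)) →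
        ∀ τ : ℝ, 1 ≤ τ →
        ∀ Uτ Uτ' : ℝ → E →L[ℂ] E,
          Uτ 0 = 1 →
          (∀ s ∈ Icc (0:ℝ) 1, Uτ s ∈ unitary (E →L[ℂ] E)) →
          (∀ s ∈ Icc (0:ℝ) 1, HasDerivWithinAt Uτ (Uτ' s) (Icc (0:ℝ) 1) s) →
          (∀ s ∈ Icc (0:ℝ) 1, Complex.I • Uτ' s = (τ : ℂ) • (H s * Uτ s)) →
          ∀ s ∈ Icc (0:ℝ) 1,
            ‖(Uτ s - UA s) * P 0‖ ≤ Ctilde * τ ^ (-(μ / (μ + ν))) := by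
  refine ⟨2*((3+3*D)*C) + Chat, ?_⟩
  intro E _ _ _ H P P' UA hHsa _hHpos _hHc hPsa hPP hP' _hP'c hHP hP'D hUA0 hUAu hUA'
    hXY τ hτ Uτ Uτ' hUτ0 hUτu hUτ' hSchr s hs
  have hτ0 : (0:ℝ) < τ := lt_of_lt_of_le one_pos hτ
  have hτC : (τ:ℂ) ≠ 0 := by exact_mod_cast (ne_of_gt hτ0)
  have hσ : 0 < μ + ν := by linarith
  set ε : ℝ := (2*τ) ^ (-(1/(μ+ν))) with hε
  have hεI : ε ∈ Ioo (0:ℝ) 1 := by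
    constructor
    · exact Real.rpow_pos_of_pos (by linarith) _
    · apply Real.rpow_lt_one_of_one_lt_of_neg (by linarith)
      simp only [Left.neg_neg_iff]; positivity
  obtain ⟨X, X', Y, hX, _, _, hcomm, hXb, hYb⟩ := hXY ε hεI
  clear_value ε
  have hεν : (0:ℝ) ≤ ε ^ (-ν) := Real.rpow_nonneg hεI.1.le _
  have hεμ : (0:ℝ) ≤ ε ^ μ := Real.rpow_nonneg hεI.1.le _
  have hXn : ∀ t ∈ Icc (0:ℝ) 1, ‖X t‖ ≤ C * ε ^ (-ν) := by
    intro t ht; have := hXb t ht; have := norm_nonneg (X' t); linarith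
  have hX'n : ∀ t ∈ Icc (0:ℝ) 1, ‖X' t‖ ≤ C * ε ^ (-ν) := by
    intro t ht; have := hXb t ht; have := norm_nonneg (X t); linarith
  -- basic operator norm bounds
  have hPn : ∀ t ∈ Icc (0:ℝ) 1, ‖P t‖ ≤ 1 := fun t ht => proj_norm_le _ (hPsa t ht) (hPP t ht)
  have hUAn : ∀ t ∈ Icc (0:ℝ) 1, ‖UA t‖ ≤ 1 := fun t ht => unit_norm_le _ (hUAu t ht)
  have hVn : ∀ t ∈ Icc (0:ℝ) 1, ‖star (Uτ t)‖ ≤ 1 :=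
    fun t ht => unit_norm_le _ (Unitary.star_mem (hUτu t ht))
  -- self-adjointness of P'
  have hP'sa : ∀ t ∈ Icc (0:ℝ) 1, star (P' t) = P' t := by
    intro t ht
    have h1 : HasDerivWithinAt P (star (P' t)) (Icc (0:ℝ) 1) t :=
      ((hP' t ht).star).congr (fun r hr => ((hPsa r hr).star_eq).symm) ((hPsa t ht).star_eq).symm
    exact deriv_unique_Icc ht h1 (hP' t ht)
  -- P' = P'P + PP'
  have hsplit : ∀ t ∈ Icc (0:ℝ) 1, P' t = P' t * P t + P t * P' t := by
    intro t ht
    have h1 : HasDerivWithinAt P (P' t * P t + P t * P' t) (Icc (0:ℝ) 1) t :=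
      ((hP' t ht).mul (hP' t ht)).congr (fun r hr => (hPP r hr).symm) (hPP t ht).symm
    exact deriv_unique_Icc ht (hP' t ht) h1
  -- derivative of star ∘ UA
  have hUA's : ∀ t ∈ Icc (0:ℝ) 1, HasDerivWithinAt (fun r => star (UA r))
      (star (UA t) * (P t * P' t - P' t * P t)) (Icc (0:ℝ) 1) t := by
    intro t ht
    have h := (hUA' t ht).star
    have he : star ((P' t * P t - P t * P' t) * UA t)
        = star (UA t) * (P t * P' t - P' t * P t) := by
      rw [star_mul, star_sub, star_mul, star_mul, (hPsa t ht).star_eq, hP'sa t ht]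
    rwa [he] at h
  -- intertwining relation
  have hIntw : ∀ t ∈ Icc (0:ℝ) 1, UA t * P 0 = P t * UA t := by
    have hF : ∀ t ∈ Icc (0:ℝ) 1, HasDerivWithinAt (fun r => star (UA r) * P r * UA r)
        ((0 : E →L[ℂ] E)) (Icc (0:ℝ) 1) t := by
      intro t ht
      have h := ((hUA's t ht).mul (hP' t ht)).mul (hUA' t ht)
      have hz := lem_kato (P t) (P' t) (star (UA t)) (UA t) (hPP t ht) (hsplit t ht)
      rw [show ((fun r => star (UA r)) * P) t = star (UA t) * P t from rfl, hz] at h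
      exact h
    intro t ht
    have h0I : (0:ℝ) ∈ Icc (0:ℝ) 1 := ⟨le_refl 0, zero_le_one⟩
    have hMV := Convex.norm_image_sub_le_of_norm_hasDerivWithin_le (C := 0)
      (f' := fun _ => (0 : E →L[ℂ] E)) hF (fun x hx => by simp) (convex_Icc 0 1) h0I ht
    have hFt : star (UA t) * P t * UA t = P 0 := by
      have hz : star (UA t) * P t * UA t - star (UA 0) * P 0 * UA 0 = 0 := by
        rw [← norm_le_zero_iff]; simpa using hMV
      have := sub_eq_zero.mp hz
      rwa [hUA0, star_one, one_mul, mul_one] at this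
    calc UA t * P 0 = UA t * (star (UA t) * P t * UA t) := by rw [hFt]
    _ = P t * UA t := by
        rw [show UA t * (star (UA t) * P t * UA t) = (UA t * star (UA t)) * (P t * UA t) by
          noncomm_ring, (Unitary.mem_iff.mp (hUAu t ht)).2, one_mul]
  -- explicit formula for Uτ'
  have hUτ'eq : ∀ t ∈ Icc (0:ℝ) 1, Uτ' t = (-(Complex.I * (τ:ℂ))) • (H t * Uτ t) := by
    intro t ht
    have h := congrArg (fun A => (-Complex.I) • A) (hSchr t ht)
    simpa only [smul_smul, neg_mul, Complex.I_mul_I, neg_neg, one_smul] using h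
  -- derivative of star ∘ Uτ
  have hV' : ∀ t ∈ Icc (0:ℝ) 1, HasDerivWithinAt (fun r => star (Uτ r))
      ((Complex.I * τ) • (star (Uτ t) * H t)) (Icc (0:ℝ) 1) t := by
    intro t ht
    have h := (hUτ' t ht).star
    rw [hUτ'eq t ht] at h
    have he : star ((-(Complex.I * (τ:ℂ))) • (H t * Uτ t))
        = (Complex.I * τ) • (star (Uτ t) * H t) := by
      rw [star_smul,
        show star (H t * Uτ t) = star (Uτ t) * H t by rw [star_mul, (hHsa t ht).star_eq]]
      congr 1
      simp [Complex.ext_iff]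
    rwa [he] at h
  -- derivative of r ↦ X r * (P r * UA r)
  set dQ : ℝ → E →L[ℂ] E := fun t =>
    X' t * (P t * UA t) + X t * (P' t * UA t + P t * ((P' t * P t - P t * P' t) * UA t))
    with hdQ
  have hQd : ∀ t ∈ Icc (0:ℝ) 1, HasDerivWithinAt (fun r => X r * (P r * UA r))
      (dQ t) (Icc (0:ℝ) 1) t :=
    fun t ht => (hX t ht).mul ((hP' t ht).mul (hUA' t ht))
  set c : ℂ := Complex.I * (τ:ℂ)⁻¹ with hc
  have hcn : ‖c‖ = τ⁻¹ := by
    rw [hc, norm_mul, Complex.norm_I, one_mul, norm_inv, Complex.norm_real,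
      Real.norm_of_nonneg hτ0.le]
  have hcI : c * (Complex.I * (τ:ℂ)) = -1 := by
    rw [hc, show Complex.I * (τ:ℂ)⁻¹ * (Complex.I * τ)
      = (Complex.I*Complex.I) * ((τ:ℂ)⁻¹ * τ) by ring, Complex.I_mul_I,
      inv_mul_cancel₀ hτC, mul_one]
  clear_value c
  -- the corrected quantity G and its derivative
  set G : ℝ → E →L[ℂ] E := fun r =>
    star (Uτ r) * UA r * P 0 + c • (star (Uτ r) * (X r * (P r * UA r))) with hG
  have hHPl : ∀ t ∈ Icc (0:ℝ) 1, ∀ Z : E →L[ℂ] E, H t * (P t * Z) = 0 := by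
    intro t ht Z; rw [← mul_assoc, hHP t ht, zero_mul]
  have hGd : ∀ t ∈ Icc (0:ℝ) 1, HasDerivWithinAt G
      (star (Uτ t) * (Y t * (P t * UA t)) + c • (star (Uτ t) * dQ t)) (Icc (0:ℝ) 1) t := by
    intro t ht
    have h1 := ((hV' t ht).mul (hUA' t ht)).mul_const (P 0)
    have h2 := ((hV' t ht).mul (hQd t ht)).const_smul c
    have h := h1.add h2
    have key : ((Complex.I * ↑τ) • (star (Uτ t) * H t) * UA t
          + star (Uτ t) * ((P' t * P t - P t * P' t) * UA t)) * P 0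
        + c • ((Complex.I * ↑τ) • (star (Uτ t) * H t) * (X t * (P t * UA t))
          + star (Uτ t) * dQ t)
        = star (Uτ t) * (Y t * (P t * UA t)) + c • (star (Uτ t) * dQ t) := by
      simp only [smul_add, smul_smul, smul_mul_assoc, add_mul, mul_assoc]
      rw [hIntw t ht]
      rw [hcomm t ht]
      simp only [sub_mul, add_mul, mul_assoc, mul_sub, mul_add, smul_sub, smul_add]
      simp only [hHPl t ht, mul_zero, zero_mul, smul_zero, zero_sub, zero_add, add_zero]
      rw [hcI]
      simp only [neg_smul, one_smul]
      abel
    rwa [key] at h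
  -- norm bound on the derivative of G
  set K : ℝ := Chat * ε^μ + (1+3*D)*(C * ε^(-ν))/τ with hK
  clear_value K
  have hGb : ∀ t ∈ Icc (0:ℝ) 1,
      ‖star (Uτ t) * (Y t * (P t * UA t)) + c • (star (Uτ t) * dQ t)‖ ≤ K := by
    intro t ht
    have hb1 : ‖star (Uτ t) * (Y t * (P t * UA t))‖ ≤ Chat * ε^μ := by
      calc ‖star (Uτ t) * (Y t * (P t * UA t))‖ ≤ 1 * (Chat * ε^μ * (1 * 1)) :=
            nmul (hVn t ht) (nmul (hYb t ht) (nmul (hPn t ht) (hUAn t ht)))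
      _ = Chat * ε^μ := by ring
    have hdQb : ‖dQ t‖ ≤ (1+3*D)*(C * ε^(-ν)) := by
      have e1 : ‖X' t * (P t * UA t)‖ ≤ C * ε^(-ν) := by
        calc ‖X' t * (P t * UA t)‖ ≤ (C * ε^(-ν)) * (1 * 1) :=
              nmul (hX'n t ht) (nmul (hPn t ht) (hUAn t ht))
        _ = C * ε^(-ν) := by ring
      have e2 : ‖P' t * UA t + P t * ((P' t * P t - P t * P' t) * UA t)‖ ≤ 3*D := by
        have e21 : ‖P' t * UA t‖ ≤ D := by
          calc ‖P' t * UA t‖ ≤ D * 1 := nmul (hP'D t ht) (hUAn t ht)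
          _ = D := mul_one D
        have e22 : ‖P t * ((P' t * P t - P t * P' t) * UA t)‖ ≤ 2*D := by
          have hcm : ‖P' t * P t - P t * P' t‖ ≤ 2*D := by
            calc ‖P' t * P t - P t * P' t‖ ≤ ‖P' t * P t‖ + ‖P t * P' t‖ := norm_sub_le _ _
            _ ≤ D * 1 + 1 * D := add_le_add (nmul (hP'D t ht) (hPn t ht))
                  (nmul (hPn t ht) (hP'D t ht))
            _ = 2*D := by ring
          calc ‖P t * ((P' t * P t - P t * P' t) * UA t)‖
              ≤ 1 * (2*D * 1) := nmul (hPn t ht) (nmul hcm (hUAn t ht))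
          _ = 2*D := by ring
        calc ‖P' t * UA t + P t * ((P' t * P t - P t * P' t) * UA t)‖
            ≤ D + 2*D := (norm_add_le _ _).trans (by gcongr)
        _ = 3*D := by ring
      have e3 : ‖X t * (P' t * UA t + P t * ((P' t * P t - P t * P' t) * UA t))‖
          ≤ (C * ε^(-ν)) * (3*D) := nmul (hXn t ht) e2
      calc ‖dQ t‖ ≤ C * ε^(-ν) + (C * ε^(-ν)) * (3*D) :=
            (norm_add_le _ _).trans (add_le_add e1 e3)
      _ = (1+3*D)*(C * ε^(-ν)) := by ring
    have hb2 : ‖c • (star (Uτ t) * dQ t)‖ ≤ (1+3*D)*(C * ε^(-ν))/τ := by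
      rw [norm_smul, hcn]
      calc τ⁻¹ * ‖star (Uτ t) * dQ t‖ ≤ τ⁻¹ * (1 * ((1+3*D)*(C * ε^(-ν)))) :=
            mul_le_mul_of_nonneg_left (nmul (hVn t ht) hdQb) (inv_nonneg.mpr hτ0.le)
      _ = (1+3*D)*(C * ε^(-ν))/τ := by rw [div_eq_mul_inv]; ring
    calc ‖star (Uτ t) * (Y t * (P t * UA t)) + c • (star (Uτ t) * dQ t)‖
        ≤ ‖star (Uτ t) * (Y t * (P t * UA t))‖ + ‖c • (star (Uτ t) * dQ t)‖ :=
          norm_add_le _ _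
    _ ≤ K := by rw [hK]; linarith
  -- mean value estimate
  have h0I : (0:ℝ) ∈ Icc (0:ℝ) 1 := ⟨le_refl 0, zero_le_one⟩
  have hMV := Convex.norm_image_sub_le_of_norm_hasDerivWithin_le hGd hGb (convex_Icc 0 1) h0I hs
  have hK0 : 0 ≤ K := by
    rw [hK]; positivity
  have hGdiff : ‖G s - G 0‖ ≤ K := by
    refine hMV.trans ?_
    have : ‖s - (0:ℝ)‖ ≤ 1 := by
      rw [sub_zero, Real.norm_of_nonneg hs.1]; exact hs.2
    nlinarith
  -- assemble
  have hunit : Uτ s * star (Uτ s) = 1 := (Unitary.mem_iff.mp (hUτu s hs)).2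
  have hWdef : (Uτ s - UA s) * P 0 = Uτ s * (P 0 - star (Uτ s) * UA s * P 0) := by
    rw [mul_sub, ← mul_assoc, ← mul_assoc, hunit, one_mul, sub_mul]
  rw [hWdef, unit_mul_norm _ _ (hUτu s hs)]
  have hdecomp : P 0 - star (Uτ s) * UA s * P 0 =
      -(G s - G 0) + c • (star (Uτ s) * (X s * (P s * UA s))) - c • (X 0 * P 0) := by
    rw [hG]
    simp only [hUτ0, hUA0, star_one, one_mul, mul_one]
    abel
  rw [hdecomp]
  have hb3 : ‖c • (star (Uτ s) * (X s * (P s * UA s)))‖ ≤ (C * ε^(-ν))/τ := by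
    rw [norm_smul, hcn]
    calc τ⁻¹ * ‖star (Uτ s) * (X s * (P s * UA s))‖
        ≤ τ⁻¹ * (1 * ((C * ε^(-ν)) * (1 * 1))) :=
          mul_le_mul_of_nonneg_left
            (nmul (hVn s hs) (nmul (hXn s hs) (nmul (hPn s hs) (hUAn s hs))))
            (inv_nonneg.mpr hτ0.le)
    _ = (C * ε^(-ν))/τ := by rw [div_eq_mul_inv]; ring
  have hb4 : ‖c • (X 0 * P 0)‖ ≤ (C * ε^(-ν))/τ := by
    rw [norm_smul, hcn]
    calc τ⁻¹ * ‖X 0 * P 0‖ ≤ τ⁻¹ * ((C * ε^(-ν)) * 1) :=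
          mul_le_mul_of_nonneg_left (nmul (hXn 0 h0I) (hPn 0 h0I)) (inv_nonneg.mpr hτ0.le)
    _ = (C * ε^(-ν))/τ := by rw [div_eq_mul_inv]; ring
  have htri : ‖-(G s - G 0) + c • (star (Uτ s) * (X s * (P s * UA s))) - c • (X 0 * P 0)‖
      ≤ K + (C * ε^(-ν))/τ + (C * ε^(-ν))/τ := by
    calc ‖-(G s - G 0) + c • (star (Uτ s) * (X s * (P s * UA s))) - c • (X 0 * P 0)‖
        ≤ ‖-(G s - G 0) + c • (star (Uτ s) * (X s * (P s * UA s)))‖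
          + ‖c • (X 0 * P 0)‖ := norm_sub_le _ _
    _ ≤ (‖-(G s - G 0)‖ + ‖c • (star (Uτ s) * (X s * (P s * UA s)))‖) + ‖c • (X 0 * P 0)‖ :=
          add_le_add_left (norm_add_le _ _) _
    _ ≤ K + (C * ε^(-ν))/τ + (C * ε^(-ν))/τ := by
          rw [norm_neg]
          exact add_le_add (add_le_add hGdiff hb3) hb4
  refine htri.trans ?_
  have hstep : K + (C * ε^(-ν))/τ + (C * ε^(-ν))/τ
      ≤ (3+3*D)*C * ε^(-ν) / τ + Chat * ε^μ := by
    rw [hK]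
    have h1 : (1+3*D)*(C * ε^(-ν))/τ + (C * ε^(-ν))/τ + (C * ε^(-ν))/τ
        = (3+3*D)*C * ε^(-ν)/τ := by ring
    linarith [h1.le, h1.ge]
  refine hstep.trans ?_
  rw [hε]
  exact rate_arith μ ν ((3+3*D)*C) Chat τ hμ hν (by nlinarith) hChat hτ
end

section
/- (Theorem II.1, logarithmic rate.) Let C, Ĉ ≥ 0, and suppose that for every ε ∈ (0,1) there exist families X_ε, Y_ε : [0,1] → B(E), with X_ε continuously differentiable and Y_ε norm-continuous, such that [P'(s), P(s)] = [H(s), X_ε(s)] + Y_ε(s), ‖X_ε(s)‖ + ‖X_ε'(s)‖ ≤ C |log ε|, and ‖Y_ε(s)‖ ≤ Ĉ ε for all s ∈ [0,1]. Then there is a constant C̃, depending only on C, Ĉ, D, such that for every τ ≥ 2 and every s ∈ [0,1], ‖(U_τ(s) − U_A(s)) P(0)‖ ≤ C̃ (log τ)/τ. -/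
universe u

open Set

section Stmt2Aux

variable {E : Type u} [NormedAddCommGroup E] [InnerProductSpace ℂ E] [CompleteSpace E]

lemma st2_norm_unitary_le {u : E →L[ℂ] E} (hu : u ∈ unitary (E →L[ℂ] E)) : ‖u‖ ≤ 1 := by
  have h2 : ‖star u * u‖ = ‖u‖ * ‖u‖ := CStarRing.norm_star_mul_self
  rw [Unitary.mem_iff.mp hu |>.1] at h2
  have hone : ‖(1 : E →L[ℂ] E)‖ ≤ 1 := by
    rw [ContinuousLinearMap.one_def]; exact ContinuousLinearMap.norm_id_le
  nlinarith [norm_nonneg u]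

lemma st2_norm_proj_le {p : E →L[ℂ] E} (h1 : IsSelfAdjoint p) (h2 : p * p = p) : ‖p‖ ≤ 1 := by
  have h3 : ‖star p * p‖ = ‖p‖ * ‖p‖ := CStarRing.norm_star_mul_self
  rw [h1.star_eq, h2] at h3
  nlinarith [norm_nonneg p]

lemma st2_sand {v a u p : E →L[ℂ] E} (hv : ‖v‖ ≤ 1) (hu : ‖u‖ ≤ 1) (hp : ‖p‖ ≤ 1) :
    ‖v * (a * (u * p))‖ ≤ ‖a‖ := by
  have h1 : ‖u * p‖ ≤ 1 := le_trans (norm_mul_le _ _) (by nlinarith [norm_nonneg u, norm_nonneg p])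
  have h2 : ‖a * (u * p)‖ ≤ ‖a‖ := le_trans (norm_mul_le _ _)
    (by nlinarith [norm_nonneg a, norm_nonneg (u*p)])
  exact le_trans (norm_mul_le _ _) (by nlinarith [norm_nonneg v, norm_nonneg (a*(u*p))])

lemma st2_derivRight {A : Type*} [NormedAddCommGroup A] [NormedSpace ℝ A]
    {f f' : ℝ → A} (hf : ∀ s ∈ Icc (0:ℝ) 1, HasDerivWithinAt f (f' s) (Icc (0:ℝ) 1) s) :
    ∀ t ∈ Ico (0:ℝ) 1, HasDerivWithinAt f (f' t) (Ici t) t := fun t ht =>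
  ((hf t ⟨ht.1, ht.2.le⟩).mono (Icc_subset_Icc_left ht.1)).mono_of_mem_nhdsWithin
    (Icc_mem_nhdsGE ht.2)

lemma st2_alg {A : Type*} [Ring A] {p q : A} (hp : p * p = p) (hq : q = q * p + p * q) :
    q + p * (q * p - p * q) = (q * p - p * q) * p := by
  have hpq : p * q = q - q * p := eq_sub_of_add_eq' hq.symm
  have hpqp : p * q * p = 0 := by rw [hpq, sub_mul, mul_assoc, hp, sub_self]
  have h1 : p * (q * p - p * q) = -(p * q) := by
    rw [mul_sub, ← mul_assoc, ← mul_assoc, hpqp, hp, zero_sub]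
  have h2 : (q * p - p * q) * p = q * p := by
    rw [sub_mul, mul_assoc, hp, hpqp, sub_zero]
  rw [h1, h2, hpq]; abel

lemma st2_intertwine {D : ℝ} (hD : 0 ≤ D) (P P' UA : ℝ → E →L[ℂ] E)
    (hPsa : ∀ s ∈ Icc (0:ℝ) 1, IsSelfAdjoint (P s))
    (hPproj : ∀ s ∈ Icc (0:ℝ) 1, P s * P s = P s)
    (hPd : ∀ s ∈ Icc (0:ℝ) 1, HasDerivWithinAt P (P' s) (Icc (0:ℝ) 1) s)
    (hP'b : ∀ s ∈ Icc (0:ℝ) 1, ‖P' s‖ ≤ D)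
    (hUA0 : UA 0 = 1)
    (hUAd : ∀ s ∈ Icc (0:ℝ) 1,
      HasDerivWithinAt UA ((P' s * P s - P s * P' s) * UA s) (Icc (0:ℝ) 1) s) :
    ∀ s ∈ Icc (0:ℝ) 1, UA s * P 0 = P s * UA s := by
  have hleib : ∀ s ∈ Icc (0:ℝ) 1, P' s = P' s * P s + P s * P' s := by
    intro s hs
    exact (uniqueDiffOn_Icc one_pos s hs).eq_deriv _ (hPd s hs)
      (((hPd s hs).mul (hPd s hs)).congr (fun t ht => (hPproj t ht).symm) (hPproj s hs).symm)
  have hGd : ∀ s ∈ Icc (0:ℝ) 1,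
      HasDerivWithinAt (fun t => P t * UA t - UA t * P 0)
        ((P' s * P s - P s * P' s) * (P s * UA s - UA s * P 0)) (Icc (0:ℝ) 1) s := by
    intro s hs
    have h1 : HasDerivWithinAt (fun t => P t * UA t - UA t * P 0)
        ((P' s * UA s + P s * ((P' s * P s - P s * P' s) * UA s))
          - (P' s * P s - P s * P' s) * UA s * P 0) (Icc (0:ℝ) 1) s :=
      ((hPd s hs).mul (hUAd s hs)).sub ((hUAd s hs).mul_const (P 0))
    convert h1 using 1
    have key : P' s + P s * (P' s * P s - P s * P' s)
        = (P' s * P s - P s * P' s) * P s := st2_alg (hPproj s hs) (hleib s hs)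
    calc (P' s * P s - P s * P' s) * (P s * UA s - UA s * P 0)
        = (P' s * P s - P s * P' s) * (P s * UA s)
          - (P' s * P s - P s * P' s) * (UA s * P 0) := mul_sub _ _ _
      _ = ((P' s * P s - P s * P' s) * P s) * UA s
          - (P' s * P s - P s * P' s) * UA s * P 0 := by
          rw [← mul_assoc (P' s * P s - P s * P' s) (P s) (UA s),
            ← mul_assoc (P' s * P s - P s * P' s) (UA s) (P 0)]
      _ = (P' s * UA s + P s * ((P' s * P s - P s * P' s) * UA s))
          - (P' s * P s - P s * P' s) * UA s * P 0 := by
          rw [← key, add_mul, mul_assoc]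
  have hGcont : ContinuousOn (fun t => P t * UA t - UA t * P 0) (Icc (0:ℝ) 1) :=
    fun s hs => (hGd s hs).continuousWithinAt
  have hG0 : P (0:ℝ) * UA 0 - UA 0 * P 0 = 0 := by rw [hUA0, mul_one, one_mul, sub_self]
  have hKb : ∀ t ∈ Icc (0:ℝ) 1, ‖P' t * P t - P t * P' t‖ ≤ 2 * D := by
    intro t ht
    have hp : ‖P t‖ ≤ 1 := st2_norm_proj_le (hPsa t ht) (hPproj t ht)
    have hq : ‖P' t‖ ≤ D := hP'b t ht
    have := norm_sub_le (P' t * P t) (P t * P' t)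
    have h1 := norm_mul_le (P' t) (P t)
    have h2 := norm_mul_le (P t) (P' t)
    nlinarith [norm_nonneg (P' t), norm_nonneg (P t)]
  have hbound : ∀ t ∈ Ico (0:ℝ) 1,
      ‖(P' t * P t - P t * P' t) * (P t * UA t - UA t * P 0)‖
        ≤ (2 * D) * ‖P t * UA t - UA t * P 0‖ + 0 := by
    intro t ht
    have h3 := norm_mul_le (P' t * P t - P t * P' t) (P t * UA t - UA t * P 0)
    have h4 := hKb t ⟨ht.1, ht.2.le⟩
    rw [add_zero]
    nlinarith [norm_nonneg (P t * UA t - UA t * P 0),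
      norm_nonneg (P' t * P t - P t * P' t)]
  have hmain := norm_le_gronwallBound_of_norm_deriv_right_le (δ := 0) (K := 2*D) (ε := 0)
    hGcont (st2_derivRight hGd) (by rw [hG0, norm_zero]) hbound
  intro s hs
  have h5 := hmain s hs
  rw [gronwallBound_ε0, zero_mul] at h5
  have hGz : P s * UA s - UA s * P 0 = 0 := by
    have h6 := le_antisymm h5 (norm_nonneg _)
    simpa using h6
  exact (sub_eq_zero.mp hGz).symm

lemma st2_algd {A : Type*} [Ring A] [Module ℂ A] [IsScalarTower ℂ A A] [SMulCommClass ℂ A A]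
    {v u p h x x' y k : A} {c d : ℂ}
    (hcd : d * c = -1)
    (hz : h * (u * p) = 0) (hk : k = (h * x - x * h) + y) :
    ((c • (v * h)) * u + v * (k * u)) * p
      + d • ((c • (v * h)) * (x * (u * p)) + v * (x' * (u * p) + x * (k * (u * p))))
    = v * (y * (u * p)) + d • (v * (x' * (u * p)) + v * (x * (k * (u * p)))) := by
  have h1 : ((c • (v * h)) * u + v * (k * u)) * p
      = c • (v * (h * (u * p))) + v * (k * (u * p)) := by
    simp only [smul_mul_assoc, add_mul, mul_assoc]
  have hkup : k * (u * p) = h * (x * (u * p)) + y * (u * p) := by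
    rw [hk, add_mul, sub_mul, mul_assoc, mul_assoc, hz, mul_zero, sub_zero]
  rw [h1]
  simp only [hz, mul_zero, smul_zero, zero_add, hkup, mul_add, smul_add, smul_smul, hcd,
    neg_smul, one_smul, smul_mul_assoc, mul_assoc]
  abel

lemma st2_mul_le_left {v a : E →L[ℂ] E} (hv : ‖v‖ ≤ 1) : ‖v * a‖ ≤ ‖a‖ :=
  le_trans (norm_mul_le _ _) (by nlinarith [norm_nonneg a, norm_nonneg v])

lemma st2_core {D B Yb τ : ℝ} (hD : 0 ≤ D) (hτ0 : 0 < τ)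
    (V UA X X' Y Kf H : ℝ → E →L[ℂ] E) (P0 : E →L[ℂ] E)
    (hVd : ∀ t ∈ Icc (0:ℝ) 1,
      HasDerivWithinAt V ((Complex.I * τ) • (V t * H t)) (Icc (0:ℝ) 1) t)
    (hUAd : ∀ t ∈ Icc (0:ℝ) 1, HasDerivWithinAt UA (Kf t * UA t) (Icc (0:ℝ) 1) t)
    (hXd : ∀ t ∈ Icc (0:ℝ) 1, HasDerivWithinAt X (X' t) (Icc (0:ℝ) 1) t)
    (hz : ∀ t ∈ Icc (0:ℝ) 1, H t * (UA t * P0) = 0)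
    (hk : ∀ t ∈ Icc (0:ℝ) 1, Kf t = (H t * X t - X t * H t) + Y t)
    (hVn : ∀ t ∈ Icc (0:ℝ) 1, ‖V t‖ ≤ 1)
    (hUAn : ∀ t ∈ Icc (0:ℝ) 1, ‖UA t‖ ≤ 1)
    (hP0n : ‖P0‖ ≤ 1)
    (hKn : ∀ t ∈ Icc (0:ℝ) 1, ‖Kf t‖ ≤ 2 * D)
    (hXn : ∀ t ∈ Icc (0:ℝ) 1, ‖X t‖ + ‖X' t‖ ≤ B)
    (hYn : ∀ t ∈ Icc (0:ℝ) 1, ‖Y t‖ ≤ Yb)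
    (hVU0 : V 0 * UA 0 = 1) :
    ∀ s ∈ Icc (0:ℝ) 1,
      ‖(V s * UA s - 1) * P0‖ ≤ (Yb + (B + 2 * D * B) / τ) + 2 * B / τ := by
  have h01 : (0:ℝ) ∈ Icc (0:ℝ) 1 := ⟨le_refl _, zero_le_one⟩
  have hτc : (τ:ℂ) ≠ 0 := by
    simp only [ne_eq, Complex.ofReal_eq_zero]; exact ne_of_gt hτ0
  have hcd : (Complex.I / τ) * (Complex.I * τ) = -1 := by
    field_simp
    exact Complex.I_sq
  have hdn : ‖Complex.I / (τ:ℂ)‖ = 1/τ := by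
    rw [norm_div, Complex.norm_I, Complex.norm_real, Real.norm_eq_abs, abs_of_pos hτ0]
  have hB0 : 0 ≤ B := le_trans (by positivity) (hXn 0 h01)
  -- derivative of t ↦ UA t * P0
  have hWd : ∀ t ∈ Icc (0:ℝ) 1,
      HasDerivWithinAt (fun r => UA r * P0) (Kf t * (UA t * P0)) (Icc (0:ℝ) 1) t := by
    intro t ht
    have h := (hUAd t ht).mul_const P0
    rwa [mul_assoc] at h
  -- derivative of G
  have hGd : ∀ t ∈ Icc (0:ℝ) 1,
      HasDerivWithinAt
        (fun r => (V r * UA r - 1) * P0 + (Complex.I / τ) • (V r * (X r * (UA r * P0))))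
        (V t * (Y t * (UA t * P0)) + (Complex.I / τ) •
          (V t * (X' t * (UA t * P0)) + V t * (X t * (Kf t * (UA t * P0)))))
        (Icc (0:ℝ) 1) t := by
    intro t ht
    have hΩ : HasDerivWithinAt (fun r => (V r * UA r - 1) * P0)
        ((((Complex.I * τ) • (V t * H t)) * UA t + V t * (Kf t * UA t)) * P0)
        (Icc (0:ℝ) 1) t :=
      (((hVd t ht).mul (hUAd t ht)).sub_const 1).mul_const P0
    have hΦ : HasDerivWithinAt (fun r => V r * (X r * (UA r * P0)))
        (((Complex.I * τ) • (V t * H t)) * (X t * (UA t * P0))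
          + V t * (X' t * (UA t * P0) + X t * (Kf t * (UA t * P0))))
        (Icc (0:ℝ) 1) t :=
      (hVd t ht).mul ((hXd t ht).mul (hWd t ht))
    have htotal := hΩ.add (hΦ.const_smul (Complex.I / (τ:ℂ)))
    have heq := st2_algd (v := V t) (u := UA t) (p := P0) (h := H t) (x := X t)
      (x' := X' t) (y := Y t) (k := Kf t) hcd (hz t ht) (hk t ht)
    rw [heq] at htotal
    exact htotal
  -- bound on the derivative of G
  have hGdb : ∀ t ∈ Icc (0:ℝ) 1,
      ‖V t * (Y t * (UA t * P0)) + (Complex.I / τ) •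
          (V t * (X' t * (UA t * P0)) + V t * (X t * (Kf t * (UA t * P0))))‖
        ≤ Yb + (B + 2 * D * B) / τ := by
    intro t ht
    have hb1 : ‖V t * (Y t * (UA t * P0))‖ ≤ Yb :=
      le_trans (st2_sand (hVn t ht) (hUAn t ht) hP0n) (hYn t ht)
    have hup : ‖UA t * P0‖ ≤ 1 := by
      have := norm_mul_le (UA t) P0
      nlinarith [norm_nonneg (UA t), norm_nonneg P0, hUAn t ht]
    have hb2 : ‖V t * (X' t * (UA t * P0))‖ ≤ ‖X' t‖ :=
      st2_sand (hVn t ht) (hUAn t ht) hP0n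
    have hb3 : ‖V t * (X t * (Kf t * (UA t * P0)))‖ ≤ ‖X t‖ * (2 * D) := by
      have e1 : ‖Kf t * (UA t * P0)‖ ≤ 2 * D := by
        have := norm_mul_le (Kf t) (UA t * P0)
        nlinarith [norm_nonneg (Kf t), hKn t ht, norm_nonneg (UA t * P0)]
      have e2 : ‖X t * (Kf t * (UA t * P0))‖ ≤ ‖X t‖ * (2 * D) := by
        have := norm_mul_le (X t) (Kf t * (UA t * P0))
        nlinarith [norm_nonneg (X t), norm_nonneg (Kf t * (UA t * P0))]
      exact le_trans (st2_mul_le_left (hVn t ht)) e2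
    have hsum : ‖V t * (X' t * (UA t * P0)) + V t * (X t * (Kf t * (UA t * P0)))‖
        ≤ B + 2 * D * B := by
      have := norm_add_le (V t * (X' t * (UA t * P0))) (V t * (X t * (Kf t * (UA t * P0))))
      have hX := hXn t ht
      nlinarith [norm_nonneg (X t), norm_nonneg (X' t)]
    calc ‖V t * (Y t * (UA t * P0)) + (Complex.I / τ) •
          (V t * (X' t * (UA t * P0)) + V t * (X t * (Kf t * (UA t * P0))))‖
        ≤ ‖V t * (Y t * (UA t * P0))‖ + ‖(Complex.I / τ) •
          (V t * (X' t * (UA t * P0)) + V t * (X t * (Kf t * (UA t * P0))))‖ :=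
          norm_add_le _ _
      _ ≤ Yb + (B + 2 * D * B) / τ := by
          rw [norm_smul, hdn]
          have h7 : (1/τ) * ‖V t * (X' t * (UA t * P0)) + V t * (X t * (Kf t * (UA t * P0)))‖
              ≤ (1/τ) * (B + 2 * D * B) := by
            apply mul_le_mul_of_nonneg_left hsum
            positivity
          have : (1/τ) * (B + 2 * D * B) = (B + 2 * D * B) / τ := by ring
          linarith [hb1]
  intro s hs
  -- mean value inequality
  have hmvt := Convex.norm_image_sub_le_of_norm_hasDerivWithin_le
    (f := fun r => (V r * UA r - 1) * P0 + (Complex.I / τ) • (V r * (X r * (UA r * P0))))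
    hGd hGdb (convex_Icc 0 1) h01 hs
  have hs01 : ‖s - (0:ℝ)‖ ≤ 1 := by
    rw [sub_zero, Real.norm_eq_abs, abs_of_nonneg hs.1]; exact hs.2
  have hΦb : ∀ t ∈ Icc (0:ℝ) 1, ‖V t * (X t * (UA t * P0))‖ ≤ B := by
    intro t ht
    refine le_trans (st2_sand (hVn t ht) (hUAn t ht) hP0n) ?_
    have := hXn t ht
    nlinarith [norm_nonneg (X' t)]
  have hG0 : (fun r => (V r * UA r - 1) * P0 + (Complex.I / τ) • (V r * (X r * (UA r * P0)))) 0
      = (Complex.I / τ) • (V 0 * (X 0 * (UA 0 * P0))) := by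
    simp only [hVU0, sub_self, zero_mul, zero_add]
  have hG0b : ‖(fun r => (V r * UA r - 1) * P0
      + (Complex.I / τ) • (V r * (X r * (UA r * P0)))) 0‖ ≤ B / τ := by
    rw [hG0, norm_smul, hdn]
    have := hΦb 0 h01
    calc (1/τ) * ‖V 0 * (X 0 * (UA 0 * P0))‖ ≤ (1/τ) * B := by
          apply mul_le_mul_of_nonneg_left this
          positivity
      _ = B / τ := by ring
  have hΦsb : ‖(Complex.I / (τ:ℂ)) • (V s * (X s * (UA s * P0)))‖ ≤ B / τ := by
    rw [norm_smul, hdn]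
    calc (1/τ) * ‖V s * (X s * (UA s * P0))‖ ≤ (1/τ) * B := by
          apply mul_le_mul_of_nonneg_left (hΦb s hs)
          positivity
      _ = B / τ := by ring
  have hMnonneg : 0 ≤ Yb + (B + 2 * D * B) / τ := by
    have := le_trans (norm_nonneg _) (hYn 0 h01)
    positivity
  have key : ‖(V s * UA s - 1) * P0‖
      ≤ ‖((fun r => (V r * UA r - 1) * P0 + (Complex.I / τ) • (V r * (X r * (UA r * P0)))) s
          - (fun r => (V r * UA r - 1) * P0 + (Complex.I / τ) • (V r * (X r * (UA r * P0)))) 0)‖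
        + ‖(fun r => (V r * UA r - 1) * P0 + (Complex.I / τ) • (V r * (X r * (UA r * P0)))) 0‖
        + ‖(Complex.I / (τ:ℂ)) • (V s * (X s * (UA s * P0)))‖ := by
    have : (V s * UA s - 1) * P0
        = ((fun r => (V r * UA r - 1) * P0 + (Complex.I / τ) • (V r * (X r * (UA r * P0)))) s
          - (fun r => (V r * UA r - 1) * P0 + (Complex.I / τ) • (V r * (X r * (UA r * P0)))) 0)
          + (fun r => (V r * UA r - 1) * P0 + (Complex.I / τ) • (V r * (X r * (UA r * P0)))) 0
          - (Complex.I / (τ:ℂ)) • (V s * (X s * (UA s * P0))) := by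
      simp only []
      abel
    rw [this]
    exact le_trans (norm_sub_le _ _) (by gcongr; exact norm_add_le _ _)
  have hmvt' : ‖((fun r => (V r * UA r - 1) * P0 + (Complex.I / τ) • (V r * (X r * (UA r * P0)))) s
      - (fun r => (V r * UA r - 1) * P0 + (Complex.I / τ) • (V r * (X r * (UA r * P0)))) 0)‖
      ≤ Yb + (B + 2 * D * B) / τ := by
    refine le_trans hmvt ?_
    nlinarith [hs01, norm_nonneg (s - (0:ℝ))]
  have hBτ : B / τ + B / τ = 2 * B / τ := by ring
  linarith [key, hmvt', hG0b, hΦsb]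


end Stmt2Aux

/-- **Theorem II.1, logarithmic rate.** Let `C, Ĉ ≥ 0` and `D ≥ 0`. Then
there is a constant `C̃`, depending only on `C, Ĉ, D`, such that the
following holds. Let `E` be a complex Hilbert space, `H(s)` self-adjoint nonnegative
bounded operators depending norm-continuously on `s ∈ [0,1]`, `P(s)` a continuously
differentiable family of orthogonal projections with `H(s)P(s) = 0` and `‖P'(s)‖ ≤ D`,
and `U_A` Kato's adiabatic evolution. Suppose for every `ε ∈ (0,1)` there are families
`X_ε` (continuously differentiable) and `Y_ε` (norm-continuous) with
`[P'(s),P(s)] = [H(s),X_ε(s)] + Y_ε(s)`, `‖X_ε(s)‖ + ‖X_ε'(s)‖ ≤ C |log ε|` and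
`‖Y_ε(s)‖ ≤ Ĉ ε` on `[0,1]`. Then for every `τ ≥ 2` and every Schrödinger evolution
`U_τ` (`i U_τ' = τ H U_τ`, `U_τ(0) = 1`, unitary), and every `s ∈ [0,1]`,
`‖(U_τ(s) − U_A(s)) P(0)‖ ≤ C̃ (log τ)/τ`. -/
theorem stmt_2 (C Chat D : ℝ) (hC : 0 ≤ C) (hChat : 0 ≤ Chat)
    (hD : 0 ≤ D) :
    ∃ Ctilde : ℝ,
      ∀ (E : Type u) [NormedAddCommGroup E] [InnerProductSpace ℂ E] [CompleteSpace E],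
      ∀ H P P' UA : ℝ → E →L[ℂ] E,
        (∀ s ∈ Icc (0:ℝ) 1, IsSelfAdjoint (H s)) →
        (∀ s ∈ Icc (0:ℝ) 1, (H s).IsPositive) →
        ContinuousOn H (Icc (0:ℝ) 1) →
        (∀ s ∈ Icc (0:ℝ) 1, IsSelfAdjoint (P s)) →
        (∀ s ∈ Icc (0:ℝ) 1, P s * P s = P s) →
        (∀ s ∈ Icc (0:ℝ) 1, HasDerivWithinAt P (P' s) (Icc (0:ℝ) 1) s) →
        ContinuousOn P' (Icc (0:ℝ) 1) →
        (∀ s ∈ Icc (0:ℝ) 1, H s * P s = 0) →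
        (∀ s ∈ Icc (0:ℝ) 1, ‖P' s‖ ≤ D) →
        UA 0 = 1 →
        (∀ s ∈ Icc (0:ℝ) 1, UA s ∈ unitary (E →L[ℂ] E)) →
        (∀ s ∈ Icc (0:ℝ) 1,
          HasDerivWithinAt UA ((P' s * P s - P s * P' s) * UA s) (Icc (0:ℝ) 1) s) →
        (∀ ε ∈ Ioo (0:ℝ) 1, ∃ X X' Y : ℝ → E →L[ℂ] E,
          (∀ s ∈ Icc (0:ℝ) 1, HasDerivWithinAt X (X' s) (Icc (0:ℝ) 1) s) ∧
          ContinuousOn X' (Icc (0:ℝ) 1) ∧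
          ContinuousOn Y (Icc (0:ℝ) 1) ∧
          (∀ s ∈ Icc (0:ℝ) 1,
            P' s * P s - P s * P' s = (H s * X s - X s * H s) + Y s) ∧
          (∀ s ∈ Icc (0:ℝ) 1, ‖X s‖ + ‖X' s‖ ≤ C * |Real.log ε|) ∧
          (∀ s ∈ Icc (0:ℝ) 1, ‖Y s‖ ≤ Chat * ε)) →
        ∀ τ : ℝ, 2 ≤ τ →
        ∀ Uτ Uτ' : ℝ → E →L[ℂ] E,
          Uτ 0 = 1 →
          (∀ s ∈ Icc (0:ℝ) 1, Uτ s ∈ unitary (E →L[ℂ] E)) →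
          (∀ s ∈ Icc (0:ℝ) 1, HasDerivWithinAt Uτ (Uτ' s) (Icc (0:ℝ) 1) s) →
          (∀ s ∈ Icc (0:ℝ) 1, Complex.I • Uτ' s = (τ : ℂ) • (H s * Uτ s)) →
          ∀ s ∈ Icc (0:ℝ) 1,
            ‖(Uτ s - UA s) * P 0‖ ≤ Ctilde * Real.log τ / τ := by
  refine ⟨(3 + 2*D)*C + Chat/Real.log 2, ?_⟩
  intro E _ _ _ H P P' UA hHsa hHpos hHc hPsa hPproj hPd hP'c hHP hP'b hUA0 hUAu hUAd hex
    τ hτ Uτ Uτ' hUτ0 hUτu hUτd hschro s hs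
  have hτ0 : (0:ℝ) < τ := lt_of_lt_of_le two_pos hτ
  have hlog2 : (0:ℝ) < Real.log 2 := Real.log_pos one_lt_two
  have hL2 : Real.log 2 ≤ Real.log τ := Real.log_le_log two_pos hτ
  have hL0 : 0 < Real.log τ := lt_of_lt_of_le hlog2 hL2
  have hεI : (1/τ) ∈ Ioo (0:ℝ) 1 := ⟨by positivity, by rw [div_lt_one hτ0]; linarith⟩
  obtain ⟨X, X', Y, hXd, hX'c, hYc, hdecomp, hXb, hYb⟩ := hex (1/τ) hεI
  have habs : |Real.log (1/τ)| = Real.log τ := by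
    rw [one_div, Real.log_inv, abs_neg, abs_of_pos hL0]
  have hXb' : ∀ t ∈ Icc (0:ℝ) 1, ‖X t‖ + ‖X' t‖ ≤ C * Real.log τ := fun t ht => by
    have := hXb t ht; rwa [habs] at this
  have hYb' : ∀ t ∈ Icc (0:ℝ) 1, ‖Y t‖ ≤ Chat / τ := fun t ht => by
    have := hYb t ht; rwa [mul_one_div] at this
  have hiw := st2_intertwine hD P P' UA hPsa hPproj hPd hP'b hUA0 hUAd
  have hUτ'eq : ∀ t ∈ Icc (0:ℝ) 1, Uτ' t = (-Complex.I * τ) • (H t * Uτ t) := by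
    intro t ht
    have h2 : (-Complex.I) • (Complex.I • Uτ' t) = Uτ' t := by
      rw [smul_smul, neg_mul, Complex.I_mul_I, neg_neg, one_smul]
    rw [← h2, hschro t ht, smul_smul]
  have hVd : ∀ t ∈ Icc (0:ℝ) 1,
      HasDerivWithinAt (fun r => star (Uτ r)) ((Complex.I * τ) • (star (Uτ t) * H t))
        (Icc (0:ℝ) 1) t := by
    intro t ht
    have h := (hUτd t ht).star
    have he : star (Uτ' t) = (Complex.I * τ) • (star (Uτ t) * H t) := by
      rw [hUτ'eq t ht, star_smul, star_mul, star_mul, (hHsa t ht).star_eq]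
      congr 1
      simp only [Complex.star_def, map_mul, map_neg, Complex.conj_I, Complex.conj_ofReal]
      ring
    rwa [he] at h
  have hz : ∀ t ∈ Icc (0:ℝ) 1, H t * (UA t * P 0) = 0 := by
    intro t ht
    rw [hiw t ht, ← mul_assoc, hHP t ht, zero_mul]
  have h01 : (0:ℝ) ∈ Icc (0:ℝ) 1 := ⟨le_refl _, zero_le_one⟩
  have hVn : ∀ t ∈ Icc (0:ℝ) 1, ‖star (Uτ t)‖ ≤ 1 := fun t ht => by
    rw [norm_star]; exact st2_norm_unitary_le (hUτu t ht)
  have hUAn : ∀ t ∈ Icc (0:ℝ) 1, ‖UA t‖ ≤ 1 := fun t ht => st2_norm_unitary_le (hUAu t ht)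
  have hP0n : ‖P 0‖ ≤ 1 := st2_norm_proj_le (hPsa 0 h01) (hPproj 0 h01)
  have hKn : ∀ t ∈ Icc (0:ℝ) 1, ‖P' t * P t - P t * P' t‖ ≤ 2 * D := by
    intro t ht
    have hp : ‖P t‖ ≤ 1 := st2_norm_proj_le (hPsa t ht) (hPproj t ht)
    have hq : ‖P' t‖ ≤ D := hP'b t ht
    have := norm_sub_le (P' t * P t) (P t * P' t)
    have h1 := norm_mul_le (P' t) (P t)
    have h2 := norm_mul_le (P t) (P' t)
    nlinarith [norm_nonneg (P' t), norm_nonneg (P t)]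
  have hVU0 : star (Uτ 0) * UA 0 = 1 := by rw [hUτ0, hUA0, star_one, one_mul]
  have hcore := st2_core hD hτ0 (fun r => star (Uτ r)) UA X X' Y
    (fun t => P' t * P t - P t * P' t) H (P 0) hVd hUAd hXd hz hdecomp hVn hUAn hP0n hKn
    hXb' hYb' hVU0 s hs
  have hUU : Uτ s * star (Uτ s) = 1 := (Unitary.mem_iff.mp (hUτu s hs)).2
  have he1 : Uτ s * ((star (Uτ s) * UA s - 1) * P 0) = (UA s - Uτ s) * P 0 := by
    rw [← mul_assoc, mul_sub, mul_one, ← mul_assoc, hUU, one_mul]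
  have he2 : (Uτ s - UA s) * P 0 = -(Uτ s * ((star (Uτ s) * UA s - 1) * P 0)) := by
    rw [he1, ← neg_mul, neg_sub]
  have hnorm1 : ‖(Uτ s - UA s) * P 0‖ ≤ ‖(star (Uτ s) * UA s - 1) * P 0‖ := by
    rw [he2, norm_neg]
    exact st2_mul_le_left (st2_norm_unitary_le (hUτu s hs))
  have hcc : Chat ≤ (Chat / Real.log 2) * Real.log τ := by
    rw [div_mul_eq_mul_div, le_div_iff₀ hlog2]
    nlinarith
  have hnum : Chat / τ + (C * Real.log τ + 2 * D * (C * Real.log τ)) / τ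
      + 2 * (C * Real.log τ) / τ
      ≤ ((3 + 2*D)*C + Chat/Real.log 2) * Real.log τ / τ := by
    rw [← add_div, ← add_div]
    gcongr
    · nlinarith [mul_nonneg (mul_nonneg hD hC) hL0.le, mul_nonneg hC hL0.le]
  calc ‖(Uτ s - UA s) * P 0‖ ≤ ‖(star (Uτ s) * UA s - 1) * P 0‖ := hnorm1
    _ ≤ (Chat / τ + (C * Real.log τ + 2 * D * (C * Real.log τ)) / τ)
        + 2 * (C * Real.log τ) / τ := hcore
    _ ≤ ((3 + 2*D)*C + Chat/Real.log 2) * Real.log τ / τ := hnum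
end

section
/- (Square-root-logarithmic rate, as used for the Dicke model.) Let C, Ĉ ≥ 0, and suppose that for every ε ∈ (0,1) there exist families X_ε, Y_ε : [0,1] → B(E), with X_ε continuously differentiable and Y_ε norm-continuous, such that [P'(s), P(s)] = [H(s), X_ε(s)] + Y_ε(s), ‖X_ε(s)‖ + ‖X_ε'(s)‖ ≤ C √|log ε|, and ‖Y_ε(s)‖ ≤ Ĉ ε for all s ∈ [0,1]. Then there is a constant C̃, depending only on C, Ĉ, D, such that for every τ ≥ 2 and every s ∈ [0,1], ‖(U_τ(s) − U_A(s)) P(0)‖ ≤ C̃ √(log τ)/τ. -/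
universe u

open Set

section Aux

variable {A : Type*}

/-- products bound -/
lemma aux_nm [NormedRing A] {a b : A} {ka kb : ℝ} (ha : ‖a‖ ≤ ka) (hb : ‖b‖ ≤ kb) :
    ‖a * b‖ ≤ ka * kb :=
  le_trans (norm_mul_le _ _)
    (mul_le_mul ha hb (norm_nonneg _) (le_trans (norm_nonneg _) ha))

lemma aux_unitary_norm_le [NormedRing A] [StarRing A] [CStarRing A]
    (h1 : ‖(1 : A)‖ ≤ 1) {u : A} (hu : u ∈ unitary A) : ‖u‖ ≤ 1 := by
  have h := (Unitary.mem_iff.mp hu).1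
  have h2 : ‖u‖ * ‖u‖ = ‖(1 : A)‖ := by rw [← CStarRing.norm_star_mul_self, h]
  nlinarith [norm_nonneg u]

lemma aux_unitary_mul_norm [NormedRing A] [StarRing A] [CStarRing A]
    (h1 : ‖(1 : A)‖ ≤ 1) {u : A} (hu : u ∈ unitary A) (a : A) : ‖u * a‖ = ‖a‖ := by
  have hu1 : ‖u‖ ≤ 1 := aux_unitary_norm_le h1 hu
  have hsu : ‖star u‖ ≤ 1 := aux_unitary_norm_le h1 (Unitary.star_mem hu)
  refine le_antisymm (le_trans (norm_mul_le _ _) (mul_le_of_le_one_left (norm_nonneg _) hu1)) ?_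
  have : a = star u * (u * a) := by
    rw [← mul_assoc, (Unitary.mem_iff.mp hu).1, one_mul]
  calc ‖a‖ = ‖star u * (u * a)‖ := by rw [← this]
    _ ≤ ‖star u‖ * ‖u * a‖ := norm_mul_le _ _
    _ ≤ ‖u * a‖ := mul_le_of_le_one_left (norm_nonneg _) hsu

lemma aux_proj_norm_le [NormedRing A] [StarRing A] [CStarRing A]
    {p : A} (hsa : star p = p) (hp : p * p = p) : ‖p‖ ≤ 1 := by
  have h2 : ‖p‖ * ‖p‖ = ‖p‖ := by rw [← CStarRing.norm_star_mul_self, hsa, hp]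
  nlinarith [norm_nonneg p]

/-- the algebraic identity showing Kato's `W` has zero derivative -/
lemma aux_algW [Ring A] (v p p' u : A) (hpp : p * p = p)
    (hkey : p' = p' * p + p * p') :
    v * (p * p' - p' * p) * (p * u) + v * (p' * u + p * ((p' * p - p * p') * u)) = 0 := by
  have h0 : p * p' * p = 0 := by
    have e : p * p' * p = p * (p' * p + p * p') - p * p * p' := by noncomm_ring
    rw [e, ← hkey, hpp, sub_self]
  have hz : (p * p' - p' * p) * p + (p' + p * (p' * p - p * p')) = 0 := by
    have e : (p * p' - p' * p) * p + (p' + p * (p' * p - p * p'))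
        = (p * p' * p + p * p' * p) + p' - p' * (p * p) - p * p * p' := by noncomm_ring
    rw [e, h0, hpp]
    nth_rewrite 1 [hkey]
    noncomm_ring
  have e2 : v * (p * p' - p' * p) * (p * u) + v * (p' * u + p * ((p' * p - p * p') * u))
      = v * (((p * p' - p' * p) * p + (p' + p * (p' * p - p * p'))) * u) := by noncomm_ring
  rw [e2, hz, zero_mul, mul_zero]

/-- the integration-by-parts derivative identity -/
lemma aux_algM [NormedRing A] [NormedAlgebra ℂ A] (τ : ℂ) (hτ : τ ≠ 0) (v h p p' u x x' y q : A)
    (h1 : p * u = u * q) (h2 : h * p = 0)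
    (h3 : p' * p - p * p' = (h * x - x * h) + y) :
    (Complex.I * τ) • (v * h) * (u * q) + v * ((p' * p - p * p') * u * q)
      + (Complex.I / τ) • ((Complex.I * τ) • (v * h) * (x * (p * u))
          + v * (x' * (p * u) + x * (p' * u + p * ((p' * p - p * p') * u))))
    = (Complex.I / τ) • (v * (x' * (p * u) + x * (p' * u) + x * (p * ((p' * p - p * p') * u))))
      + v * (y * (p * u)) := by
  have hI : Complex.I / τ * (Complex.I * τ) = -1 := by
    field_simp
    rw [sq, Complex.I_mul_I]
  have t1 : (Complex.I * τ) • (v * h) * (u * q) = 0 := by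
    rw [← h1, smul_mul_assoc]
    have e : v * h * (p * u) = v * (h * p * u) := by noncomm_ring
    rw [e, h2, zero_mul, mul_zero, smul_zero]
  have t2 : v * ((p' * p - p * p') * u * q) = v * (h * (x * (p * u))) + v * (y * (p * u)) := by
    have e : (p' * p - p * p') * u * q = (p' * p - p * p') * (u * q) := by noncomm_ring
    rw [e, ← h1, h3]
    have e2 : ((h * x - x * h) + y) * (p * u)
        = h * (x * (p * u)) - x * (h * p * u) + y * (p * u) := by noncomm_ring
    rw [e2, h2]
    simp [mul_add, mul_sub]
  have t3 : (Complex.I / τ) • ((Complex.I * τ) • (v * h) * (x * (p * u)))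
      = -(v * (h * (x * (p * u)))) := by
    rw [smul_mul_assoc, smul_smul, hI]
    have e : v * h * (x * (p * u)) = v * (h * (x * (p * u))) := by noncomm_ring
    rw [e, neg_smul, one_smul]
  have t4 : (Complex.I / τ) • (v * (x' * (p * u) + x * (p' * u + p * ((p' * p - p * p') * u))))
      = (Complex.I / τ) • (v * (x' * (p * u) + x * (p' * u)
          + x * (p * ((p' * p - p * p') * u)))) := by
    congr 1; noncomm_ring
  rw [smul_add, t1, t2, t3, t4]
  abel

lemma aux_half {τ : ℝ} (hτ : 2 ≤ τ) : 1/2 ≤ Real.sqrt (Real.log τ) := by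
  have hlog2 : (0.6931471803 : ℝ) < Real.log 2 := Real.log_two_gt_d9
  have h : Real.log 2 ≤ Real.log τ := Real.log_le_log (by norm_num) hτ
  have e : Real.sqrt ((1/2 : ℝ)^2) = 1/2 := Real.sqrt_sq (by norm_num)
  calc (1/2 : ℝ) = Real.sqrt ((1/2)^2) := e.symm
    _ ≤ Real.sqrt (Real.log τ) := Real.sqrt_le_sqrt (by nlinarith)

lemma aux_final {C Chat D L τ : ℝ} (hChat : 0 ≤ Chat) (hτ : 0 < τ)
    (hL : 1/2 ≤ Real.sqrt L) :
    (C * Real.sqrt L * (3 + 3*D) + Chat) / τ ≤ ((3 + 3*D)*C + 2*Chat) * Real.sqrt L / τ := by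
  have h : C * Real.sqrt L * (3+3*D) + Chat ≤ ((3+3*D)*C + 2*Chat) * Real.sqrt L := by
    nlinarith [mul_nonneg hChat (by linarith : (0:ℝ) ≤ 2 * Real.sqrt L - 1)]
  gcongr

end Aux

set_option maxHeartbeats 1000000

/-- **Square-root-logarithmic rate, as used for the Dicke model.** Let `C, Ĉ ≥ 0` and `D ≥ 0`. Then
there is a constant `C̃`, depending only on `C, Ĉ, D`, such that the
following holds. Let `E` be a complex Hilbert space, `H(s)` self-adjoint nonnegative
bounded operators depending norm-continuously on `s ∈ [0,1]`, `P(s)` a continuously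
differentiable family of orthogonal projections with `H(s)P(s) = 0` and `‖P'(s)‖ ≤ D`,
and `U_A` Kato's adiabatic evolution. Suppose for every `ε ∈ (0,1)` there are families
`X_ε` (continuously differentiable) and `Y_ε` (norm-continuous) with
`[P'(s),P(s)] = [H(s),X_ε(s)] + Y_ε(s)`, `‖X_ε(s)‖ + ‖X_ε'(s)‖ ≤ C √|log ε|` and
`‖Y_ε(s)‖ ≤ Ĉ ε` on `[0,1]`. Then for every `τ ≥ 2` and every Schrödinger evolution
`U_τ` (`i U_τ' = τ H U_τ`, `U_τ(0) = 1`, unitary), and every `s ∈ [0,1]`,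
`‖(U_τ(s) − U_A(s)) P(0)‖ ≤ C̃ √(log τ)/τ`. -/
theorem stmt_3 (C Chat D : ℝ) (hC : 0 ≤ C) (hChat : 0 ≤ Chat)
    (hD : 0 ≤ D) :
    ∃ Ctilde : ℝ,
      ∀ (E : Type u) [NormedAddCommGroup E] [InnerProductSpace ℂ E] [CompleteSpace E],
      ∀ H P P' UA : ℝ → E →L[ℂ] E,
        (∀ s ∈ Icc (0:ℝ) 1, IsSelfAdjoint (H s)) →
        (∀ s ∈ Icc (0:ℝ) 1, (H s).IsPositive) →
        ContinuousOn H (Icc (0:ℝ) 1) →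
        (∀ s ∈ Icc (0:ℝ) 1, IsSelfAdjoint (P s)) →
        (∀ s ∈ Icc (0:ℝ) 1, P s * P s = P s) →
        (∀ s ∈ Icc (0:ℝ) 1, HasDerivWithinAt P (P' s) (Icc (0:ℝ) 1) s) →
        ContinuousOn P' (Icc (0:ℝ) 1) →
        (∀ s ∈ Icc (0:ℝ) 1, H s * P s = 0) →
        (∀ s ∈ Icc (0:ℝ) 1, ‖P' s‖ ≤ D) →
        UA 0 = 1 →
        (∀ s ∈ Icc (0:ℝ) 1, UA s ∈ unitary (E →L[ℂ] E)) →
        (∀ s ∈ Icc (0:ℝ) 1,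
          HasDerivWithinAt UA ((P' s * P s - P s * P' s) * UA s) (Icc (0:ℝ) 1) s) →
        (∀ ε ∈ Ioo (0:ℝ) 1, ∃ X X' Y : ℝ → E →L[ℂ] E,
          (∀ s ∈ Icc (0:ℝ) 1, HasDerivWithinAt X (X' s) (Icc (0:ℝ) 1) s) ∧
          ContinuousOn X' (Icc (0:ℝ) 1) ∧
          ContinuousOn Y (Icc (0:ℝ) 1) ∧
          (∀ s ∈ Icc (0:ℝ) 1,
            P' s * P s - P s * P' s = (H s * X s - X s * H s) + Y s) ∧
          (∀ s ∈ Icc (0:ℝ) 1, ‖X s‖ + ‖X' s‖ ≤ C * Real.sqrt |Real.log ε|) ∧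
          (∀ s ∈ Icc (0:ℝ) 1, ‖Y s‖ ≤ Chat * ε)) →
        ∀ τ : ℝ, 2 ≤ τ →
        ∀ Uτ Uτ' : ℝ → E →L[ℂ] E,
          Uτ 0 = 1 →
          (∀ s ∈ Icc (0:ℝ) 1, Uτ s ∈ unitary (E →L[ℂ] E)) →
          (∀ s ∈ Icc (0:ℝ) 1, HasDerivWithinAt Uτ (Uτ' s) (Icc (0:ℝ) 1) s) →
          (∀ s ∈ Icc (0:ℝ) 1, Complex.I • Uτ' s = (τ : ℂ) • (H s * Uτ s)) →
          ∀ s ∈ Icc (0:ℝ) 1,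
            ‖(Uτ s - UA s) * P 0‖ ≤ Ctilde * Real.sqrt (Real.log τ) / τ := by
  refine ⟨(3 + 3 * D) * C + 2 * Chat, ?_⟩
  intro E _ _ _ H P P' UA hHsa hHpos hHcont hPsa hPidem hPderiv hP'cont hHP hP'bound hUA0
    hUAun hUAderiv hXY τ hτ Uτ Uτ' hUτ0 hUτun hUτderiv hSchr s hs
  have h0mem : (0 : ℝ) ∈ Icc (0:ℝ) 1 := by constructor <;> norm_num
  have hτ0 : (0:ℝ) < τ := by linarith
  have hτne : (τ:ℂ) ≠ 0 := by exact_mod_cast ne_of_gt hτ0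
  have hIcc : Convex ℝ (Icc (0:ℝ) 1) := convex_Icc 0 1
  have hUD : UniqueDiffOn ℝ (Icc (0:ℝ) 1) := uniqueDiffOn_Icc one_pos
  have hone' : ‖(1 : E →L[ℂ] E)‖ ≤ 1 := by
    rw [ContinuousLinearMap.one_def]; exact ContinuousLinearMap.norm_id_le
  -- ε = 1/τ
  set ε : ℝ := 1 / τ with hε
  have hεIoo : ε ∈ Ioo (0:ℝ) 1 := ⟨by positivity, by rw [hε, div_lt_one hτ0]; linarith⟩
  obtain ⟨X, X', Y, hXd, hX'c, hYc, hdec, hXb, hYb⟩ := hXY ε hεIoo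
  -- logs
  have hlog2 : (0.6931471803 : ℝ) < Real.log 2 := Real.log_two_gt_d9
  have hlogτ : Real.log 2 ≤ Real.log τ := Real.log_le_log (by norm_num) hτ
  have hlogpos : (0:ℝ) < Real.log τ := by linarith
  have habs : |Real.log ε| = Real.log τ := by
    rw [hε, one_div, Real.log_inv, abs_neg, abs_of_pos hlogpos]
  set B : ℝ := C * Real.sqrt (Real.log τ) with hB
  have hsqnn : (0:ℝ) ≤ Real.sqrt (Real.log τ) := Real.sqrt_nonneg _
  have hBnn : 0 ≤ B := by positivity
  have hXB : ∀ t ∈ Icc (0:ℝ) 1, ‖X t‖ ≤ B := by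
    intro t ht
    have := hXb t ht; rw [habs] at this
    have := norm_nonneg (X' t); linarith
  have hX'B : ∀ t ∈ Icc (0:ℝ) 1, ‖X' t‖ ≤ B := by
    intro t ht
    have := hXb t ht; rw [habs] at this
    have := norm_nonneg (X t); linarith
  -- self-adjointness of P'
  have hPsa' : ∀ t ∈ Icc (0:ℝ) 1, star (P' t) = P' t := by
    intro t ht
    have h1 : HasDerivWithinAt P (star (P' t)) (Icc (0:ℝ) 1) t :=
      ((hPderiv t ht).star).congr (fun y hy => (hPsa y hy).symm) (hPsa t ht).symm
    exact (h1.derivWithin (hUD t ht)).symm.trans ((hPderiv t ht).derivWithin (hUD t ht))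
  -- Leibniz identity for the projection
  have hkey : ∀ t ∈ Icc (0:ℝ) 1, P' t = P' t * P t + P t * P' t := by
    intro t ht
    have h1 : HasDerivWithinAt (fun y => P y * P y) (P' t * P t + P t * P' t) (Icc (0:ℝ) 1) t :=
      (hPderiv t ht).mul (hPderiv t ht)
    have h2 : HasDerivWithinAt (fun y => P y * P y) (P' t) (Icc (0:ℝ) 1) t :=
      (hPderiv t ht).congr (fun y hy => hPidem y hy) (hPidem t ht)
    exact (h2.derivWithin (hUD t ht)).symm.trans (h1.derivWithin (hUD t ht))
  -- derivative of star UA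
  have hUAsd : ∀ t ∈ Icc (0:ℝ) 1, HasDerivWithinAt (fun y => star (UA y))
      (star (UA t) * (P t * P' t - P' t * P t)) (Icc (0:ℝ) 1) t := by
    intro t ht
    have h1 := (hUAderiv t ht).star
    have e : star ((P' t * P t - P t * P' t) * UA t)
        = star (UA t) * (P t * P' t - P' t * P t) := by
      simp only [star_mul, star_sub, (hPsa t ht).star_eq, hPsa' t ht]
    rw [e] at h1
    exact h1
  -- Kato's intertwining relation
  have hW : ∀ t ∈ Icc (0:ℝ) 1,
      HasDerivWithinAt (fun y => star (UA y) * (P y * UA y)) 0 (Icc (0:ℝ) 1) t := by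
    intro t ht
    have h1 := (hUAsd t ht).mul ((hPderiv t ht).mul (hUAderiv t ht))
    have e := aux_algW (star (UA t)) (P t) (P' t) (UA t) (hPidem t ht) (hkey t ht)
    simp only [Pi.mul_apply] at h1
    rw [e] at h1
    exact h1
  have hWconst : ∀ t ∈ Icc (0:ℝ) 1, star (UA t) * (P t * UA t) = P 0 := by
    intro t ht
    have hb : ∀ y ∈ Icc (0:ℝ) 1, ‖(0 : E →L[ℂ] E)‖ ≤ 0 := by simp
    have hle := hIcc.norm_image_sub_le_of_norm_hasDerivWithin_le
      (f' := fun _ => (0 : E →L[ℂ] E)) hW hb h0mem ht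
    rw [zero_mul] at hle
    have h00 : star (UA 0) * (P 0 * UA 0) = P 0 := by rw [hUA0]; simp
    have := sub_eq_zero.mp (norm_le_zero_iff.mp hle)
    rw [this, h00]
  have hint : ∀ t ∈ Icc (0:ℝ) 1, P t * UA t = UA t * P 0 := by
    intro t ht
    have h2 := (Unitary.mem_iff.mp (hUAun t ht)).2
    calc P t * UA t = (UA t * star (UA t)) * (P t * UA t) := by rw [h2, one_mul]
      _ = UA t * (star (UA t) * (P t * UA t)) := by rw [mul_assoc]
      _ = UA t * P 0 := by rw [hWconst t ht]
  -- derivative of star Uτ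
  have hVd : ∀ t ∈ Icc (0:ℝ) 1, HasDerivWithinAt (fun y => star (Uτ y))
      ((Complex.I * τ) • (star (Uτ t) * H t)) (Icc (0:ℝ) 1) t := by
    intro t ht
    have h1 := (hUτderiv t ht).star
    have e : star (Uτ' t) = (Complex.I * τ) • (star (Uτ t) * H t) := by
      have h2 := congrArg star (hSchr t ht)
      rw [star_smul, star_smul, star_mul, (hHsa t ht).star_eq] at h2
      simp only [Complex.star_def, Complex.conj_I, Complex.conj_ofReal] at h2
      have h3 := congrArg (fun z => Complex.I • z) h2
      simp only [smul_smul] at h3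
      rw [show Complex.I * -Complex.I = 1 by rw [mul_neg, Complex.I_mul_I]; ring,
        one_smul] at h3
      exact h3
    rw [e] at h1
    exact h1
  -- the modified function M and its derivative R
  set R : ℝ → E →L[ℂ] E := fun t =>
    (Complex.I / τ) • (star (Uτ t) * (X' t * (P t * UA t) + X t * (P' t * UA t)
        + X t * (P t * ((P' t * P t - P t * P' t) * UA t))))
      + star (Uτ t) * (Y t * (P t * UA t)) with hR
  have hMd : ∀ t ∈ Icc (0:ℝ) 1, HasDerivWithinAt
      (fun y => star (Uτ y) * (UA y * P 0)
        + (Complex.I / τ) • (star (Uτ y) * (X y * (P y * UA y)))) (R t) (Icc (0:ℝ) 1) t := by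
    intro t ht
    have hG := (hVd t ht).mul ((hUAderiv t ht).mul_const (P 0))
    have hK := ((hVd t ht).mul
      ((hXd t ht).mul ((hPderiv t ht).mul (hUAderiv t ht)))).const_smul (Complex.I / τ)
    have h := hG.add hK
    have e := aux_algM (τ : ℂ) hτne (star (Uτ t)) (H t) (P t) (P' t) (UA t) (X t) (X' t)
      (Y t) (P 0) (hint t ht) (hHP t ht) (hdec t ht)
    simp only [Pi.mul_apply] at h
    rw [e] at h
    exact h
  -- norm bounds
  have hVn : ∀ t ∈ Icc (0:ℝ) 1, ‖star (Uτ t)‖ ≤ 1 := fun t ht =>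
    aux_unitary_norm_le hone' (Unitary.star_mem (hUτun t ht))
  have hUAn : ∀ t ∈ Icc (0:ℝ) 1, ‖UA t‖ ≤ 1 := fun t ht =>
    aux_unitary_norm_le hone' (hUAun t ht)
  have hPn : ∀ t ∈ Icc (0:ℝ) 1, ‖P t‖ ≤ 1 := fun t ht =>
    aux_proj_norm_le ((hPsa t ht).star_eq) (hPidem t ht)
  have hcn : ∀ t ∈ Icc (0:ℝ) 1, ‖P' t * P t - P t * P' t‖ ≤ 2 * D := by
    intro t ht
    calc ‖P' t * P t - P t * P' t‖ ≤ ‖P' t * P t‖ + ‖P t * P' t‖ := norm_sub_le _ _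
      _ ≤ D * 1 + 1 * D := add_le_add (aux_nm (hP'bound t ht) (hPn t ht))
          (aux_nm (hPn t ht) (hP'bound t ht))
      _ = 2 * D := by ring
  have hIτ : ‖(Complex.I / τ : ℂ)‖ = 1 / τ := by
    rw [norm_div, Complex.norm_I, Complex.norm_real, Real.norm_eq_abs, abs_of_pos hτ0]
  set CR : ℝ := (1/τ) * (B * (1 + 3 * D)) + Chat * ε with hCR
  have hRb : ∀ t ∈ Icc (0:ℝ) 1, ‖R t‖ ≤ CR := by
    intro t ht
    have h1 : ‖X' t * (P t * UA t)‖ ≤ B * 1 :=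
      aux_nm (hX'B t ht) (le_trans (aux_nm (hPn t ht) (hUAn t ht)) (by norm_num))
    have h2 : ‖X t * (P' t * UA t)‖ ≤ B * D :=
      aux_nm (hXB t ht) (le_trans (aux_nm (hP'bound t ht) (hUAn t ht)) (by norm_num))
    have h3 : ‖X t * (P t * ((P' t * P t - P t * P' t) * UA t))‖ ≤ B * (2 * D) := by
      refine aux_nm (hXB t ht) ?_
      calc ‖P t * ((P' t * P t - P t * P' t) * UA t)‖ ≤ 1 * (2 * D * 1) :=
            aux_nm (hPn t ht) (aux_nm (hcn t ht) (hUAn t ht))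
        _ = 2 * D := by ring
    have hz : ‖X' t * (P t * UA t) + X t * (P' t * UA t)
        + X t * (P t * ((P' t * P t - P t * P' t) * UA t))‖ ≤ B * (1 + 3 * D) := by
      calc ‖_ + _ + _‖ ≤ ‖X' t * (P t * UA t) + X t * (P' t * UA t)‖
            + ‖X t * (P t * ((P' t * P t - P t * P' t) * UA t))‖ := norm_add_le _ _
        _ ≤ (‖X' t * (P t * UA t)‖ + ‖X t * (P' t * UA t)‖) + B * (2 * D) :=
            add_le_add (norm_add_le _ _) h3
        _ ≤ (B * 1 + B * D) + B * (2 * D) := by linarith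
        _ = B * (1 + 3 * D) := by ring
    have hy : ‖Y t * (P t * UA t)‖ ≤ Chat * ε := by
      calc ‖Y t * (P t * UA t)‖ ≤ (Chat * ε) * (1 * 1) :=
            aux_nm (hYb t ht) (aux_nm (hPn t ht) (hUAn t ht))
        _ = Chat * ε := by ring
    calc ‖R t‖ ≤ ‖(Complex.I / τ : ℂ) • (star (Uτ t) * (X' t * (P t * UA t)
            + X t * (P' t * UA t) + X t * (P t * ((P' t * P t - P t * P' t) * UA t))))‖
          + ‖star (Uτ t) * (Y t * (P t * UA t))‖ := norm_add_le _ _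
      _ ≤ (1/τ) * (1 * (B * (1 + 3 * D))) + 1 * (Chat * ε) := by
          rw [norm_smul, hIτ]
          exact add_le_add
            (mul_le_mul_of_nonneg_left (aux_nm (hVn t ht) hz) (by positivity))
            (aux_nm (hVn t ht) hy)
      _ = CR := by rw [hCR]; ring
  -- mean value estimate for M
  have hMbound := hIcc.norm_image_sub_le_of_norm_hasDerivWithin_le hMd hRb h0mem hs
  have hsnorm : ‖s - 0‖ ≤ 1 := by
    rw [sub_zero, Real.norm_eq_abs, abs_of_nonneg hs.1]; exact hs.2
  have hCRnn : 0 ≤ CR := by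
    rw [hCR]; have : (0:ℝ) < ε := hεIoo.1; positivity
  have hM1 : ‖(star (Uτ s) * (UA s * P 0)
        + (Complex.I / τ) • (star (Uτ s) * (X s * (P s * UA s))))
      - (star (Uτ 0) * (UA 0 * P 0)
        + (Complex.I / τ) • (star (Uτ 0) * (X 0 * (P 0 * UA 0))))‖ ≤ CR :=
    le_trans hMbound (by nlinarith)
  -- identify initial value and unfold
  have hKb : ∀ t ∈ Icc (0:ℝ) 1, ‖star (Uτ t) * (X t * (P t * UA t))‖ ≤ B := by
    intro t ht
    calc ‖star (Uτ t) * (X t * (P t * UA t))‖ ≤ 1 * (B * (1 * 1)) :=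
          aux_nm (hVn t ht) (aux_nm (hXB t ht) (aux_nm (hPn t ht) (hUAn t ht)))
      _ = B := by ring
  have hG0 : star (Uτ 0) * (UA 0 * P 0) = P 0 := by
    rw [hUτ0, hUA0]; simp
  -- final norm identity
  have hstep1 : star (Uτ s) * ((Uτ s - UA s) * P 0)
      = P 0 - star (Uτ s) * (UA s * P 0) := by
    have e : star (Uτ s) * ((Uτ s - UA s) * P 0)
        = (star (Uτ s) * Uτ s) * P 0 - star (Uτ s) * (UA s * P 0) := by noncomm_ring
    rw [e, (Unitary.mem_iff.mp (hUτun s hs)).1, one_mul]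
  have hstep2 : ‖(Uτ s - UA s) * P 0‖ = ‖P 0 - star (Uτ s) * (UA s * P 0)‖ := by
    rw [← hstep1, aux_unitary_mul_norm hone' (Unitary.star_mem (hUτun s hs))]
  -- decompose
  have hstep3 : P 0 - star (Uτ s) * (UA s * P 0)
      = ((star (Uτ 0) * (UA 0 * P 0)
          + (Complex.I / τ) • (star (Uτ 0) * (X 0 * (P 0 * UA 0))))
        - (star (Uτ s) * (UA s * P 0)
          + (Complex.I / τ) • (star (Uτ s) * (X s * (P s * UA s)))))
        + ((Complex.I / τ) • (star (Uτ s) * (X s * (P s * UA s)))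
          - (Complex.I / τ) • (star (Uτ 0) * (X 0 * (P 0 * UA 0)))) := by
    rw [hG0]; abel
  have hQ : ‖(Uτ s - UA s) * P 0‖ ≤ CR + (1/τ) * (2 * B) := by
    rw [hstep2, hstep3]
    calc ‖_ + _‖ ≤ ‖(star (Uτ 0) * (UA 0 * P 0)
            + (Complex.I / τ) • (star (Uτ 0) * (X 0 * (P 0 * UA 0))))
          - (star (Uτ s) * (UA s * P 0)
            + (Complex.I / τ) • (star (Uτ s) * (X s * (P s * UA s))))‖
          + ‖(Complex.I / τ) • (star (Uτ s) * (X s * (P s * UA s)))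
            - (Complex.I / τ) • (star (Uτ 0) * (X 0 * (P 0 * UA 0)))‖ := norm_add_le _ _
      _ ≤ CR + (1/τ) * (2 * B) := by
          refine add_le_add ?_ ?_
          · rw [norm_sub_rev]; exact hM1
          · calc ‖_ - _‖ ≤ ‖(Complex.I / τ) • (star (Uτ s) * (X s * (P s * UA s)))‖
                + ‖(Complex.I / τ) • (star (Uτ 0) * (X 0 * (P 0 * UA 0)))‖ := norm_sub_le _ _
              _ ≤ (1/τ) * B + (1/τ) * B := by
                  rw [norm_smul, norm_smul, hIτ]
                  exact add_le_add
                    (mul_le_mul_of_nonneg_left (hKb s hs) (by positivity))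
                    (mul_le_mul_of_nonneg_left (hKb 0 h0mem) (by positivity))
              _ = (1/τ) * (2 * B) := by ring
  -- final numeric estimate
  have hs1 : (1/2 : ℝ) ≤ Real.sqrt (Real.log τ) := aux_half hτ
  calc ‖(Uτ s - UA s) * P 0‖ ≤ CR + (1/τ) * (2 * B) := hQ
    _ = (C * Real.sqrt (Real.log τ) * (3 + 3 * D) + Chat) / τ := by
        rw [hCR, hB, hε]; ring
    _ ≤ ((3 + 3 * D) * C + 2 * Chat) * Real.sqrt (Real.log τ) / τ :=
        aux_final hChat hτ0 hs1
end

section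
/- (Kato's intertwining property.) Let E be a complex Banach space, P : [0,1] → B(E) a continuously differentiable family of idempotents (P(s)² = P(s) for all s), and let U_A : [0,1] → B(E) be differentiable with U_A(0) = 1 and U_A'(s) = [P'(s), P(s)] U_A(s) for all s ∈ [0,1]. Then U_A(s) P(0) = P(s) U_A(s) for every s ∈ [0,1]. -/
/-!
Differentiating `P(s)² = P(s)` gives `P'P + PP' = P'`, which for an idempotent is equivalent to
`P' = [A, P]` with `A = [P', P]`. Hence the defect `F(s) = U_A(s) P(0) - P(s) U_A(s)` solves the
linear equation `F' = A F` with `F(0) = 0`, and Grönwall's inequality forces `F = 0`.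
-/

open Set

lemma IsIdempotentElem.commutator_commutator_eq {R : Type*} [Ring R] {p p' : R}
    (hp : IsIdempotentElem p) (hp' : p' * p + p * p' = p') :
    (p' * p - p * p') * p - p * (p' * p - p * p') = p' := by
  have hpp'p : p * p' * p = 0 := by
    have h := congrArg (p * ·) hp'
    simp only [mul_add, ← mul_assoc, hp.eq] at h
    exact add_eq_right.mp h
  calc (p' * p - p * p') * p - p * (p' * p - p * p')
      = p' * (p * p) - p * p' * p - p * p' * p + p * p * p' := by noncomm_ring
    _ = p' := by rw [hp.eq, hpp'p, sub_zero, sub_zero, hp']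

section NormedAlgebra

variable {𝕜 𝔸 : Type*} [NontriviallyNormedField 𝕜] [NormedRing 𝔸] [NormedAlgebra 𝕜 𝔸]

lemma HasDerivWithinAt.mul_add_mul_eq_of_isIdempotentElem {P : 𝕜 → 𝔸} {P' : 𝔸} {s : Set 𝕜}
    {x : 𝕜} (hP : HasDerivWithinAt P P' s x) (hidem : ∀ t ∈ s, IsIdempotentElem (P t))
    (hx : x ∈ s) (hs : UniqueDiffWithinAt 𝕜 s x) :
    P' * P x + P x * P' = P' :=
  hs.eq_deriv _ ((hP.mul hP).congr (fun t ht => (hidem t ht).eq.symm) (hidem x hx).eq.symm) hP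

lemma HasDerivWithinAt.mul_const_sub_mul {U P : 𝕜 → 𝔸} {A : 𝔸} {s : Set 𝕜} {x : 𝕜} (Q : 𝔸)
    (hU : HasDerivWithinAt U (A * U x) s x) (hP : HasDerivWithinAt P (A * P x - P x * A) s x) :
    HasDerivWithinAt (fun t => U t * Q - P t * U t) (A * (U x * Q - P x * U x)) s x :=
  ((hU.mul_const Q).sub (hP.mul hU)).congr_deriv (by noncomm_ring)

end NormedAlgebra

theorem eq_zero_of_hasDerivWithinAt_mul_left {𝔸 : Type*} [NormedRing 𝔸] [NormedAlgebra ℝ 𝔸]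
    {A F : ℝ → 𝔸} {a b : ℝ} (hA : ContinuousOn A (Icc a b))
    (hF : ∀ t ∈ Icc a b, HasDerivWithinAt F (A t * F t) (Icc a b) t) (ha : F a = 0) :
    ∀ t ∈ Icc a b, F t = 0 := by
  obtain ⟨C, hC⟩ := isCompact_Icc.exists_bound_of_continuousOn hA
  refine eq_zero_of_abs_deriv_le_mul_abs_self_of_eq_zero_right (f' := fun t => A t * F t)
    (K := C) (fun t ht => (hF t ht).continuousWithinAt) (fun t ht => ?_) ha (fun t ht => ?_)
  · exact (hF t (Ico_subset_Icc_self ht)).mono_of_mem_nhdsWithin (Icc_mem_nhdsGE_of_mem ht)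
  · calc ‖A t * F t‖ ≤ ‖A t‖ * ‖F t‖ := norm_mul_le _ _
      _ ≤ C * ‖F t‖ := by gcongr; exact hC t (Ico_subset_Icc_self ht)

theorem stmt_4_general {E : Type*} [NormedAddCommGroup E] [NormedSpace ℂ E]
    (P P' UA : ℝ → E →L[ℂ] E)
    (hP_idem : ∀ s ∈ Icc (0:ℝ) 1, P s * P s = P s)
    (hP_deriv : ∀ s ∈ Icc (0:ℝ) 1, HasDerivWithinAt P (P' s) (Icc (0:ℝ) 1) s)
    (hP'_cont : ContinuousOn P' (Icc (0:ℝ) 1))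
    (hUA0 : UA 0 = 1)
    (hUA_deriv : ∀ s ∈ Icc (0:ℝ) 1,
      HasDerivWithinAt UA ((P' s * P s - P s * P' s) * UA s) (Icc (0:ℝ) 1) s) :
    ∀ s ∈ Icc (0:ℝ) 1, UA s * P 0 = P s * UA s := by
  have hP_cont : ContinuousOn P (Icc 0 1) := fun s hs => (hP_deriv s hs).continuousWithinAt
  have hP'_eq_commutator : ∀ s ∈ Icc (0:ℝ) 1,
      P' s = (P' s * P s - P s * P' s) * P s - P s * (P' s * P s - P s * P' s) := by
    intro s hs
    have hP'P := (hP_deriv s hs).mul_add_mul_eq_of_isIdempotentElem hP_idem hs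
      (uniqueDiffOn_Icc one_pos s hs)
    exact (IsIdempotentElem.commutator_commutator_eq (hP_idem s hs) hP'P).symm
  have hdefect_deriv : ∀ s ∈ Icc (0:ℝ) 1, HasDerivWithinAt (fun t => UA t * P 0 - P t * UA t)
      ((P' s * P s - P s * P' s) * (UA s * P 0 - P s * UA s)) (Icc (0:ℝ) 1) s := fun s hs =>
    (hUA_deriv s hs).mul_const_sub_mul (P 0)
      ((hP_deriv s hs).congr_deriv (hP'_eq_commutator s hs))
  have hdefect := eq_zero_of_hasDerivWithinAt_mul_left
    ((hP'_cont.mul hP_cont).sub (hP_cont.mul hP'_cont)) hdefect_deriv (by simp [hUA0])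
  exact fun s hs => sub_eq_zero.mp (hdefect s hs)

/-- **Kato's intertwining property.** Let `E` be a complex Banach space,
`P : [0,1] → B(E)` a continuously differentiable family of idempotents
(`P(s)² = P(s)`, with derivative `P'` continuous on `[0,1]`), and let
`U_A : [0,1] → B(E)` be differentiable with `U_A(0) = 1` and
`U_A'(s) = [P'(s), P(s)] U_A(s)` for all `s ∈ [0,1]`.
Then `U_A(s) P(0) = P(s) U_A(s)` for every `s ∈ [0,1]`. -/
theorem stmt_4 {E : Type*} [NormedAddCommGroup E] [NormedSpace ℂ E] [CompleteSpace E]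
    (P P' UA : ℝ → E →L[ℂ] E)
    (hP_idem : ∀ s ∈ Icc (0:ℝ) 1, P s * P s = P s)
    (hP_deriv : ∀ s ∈ Icc (0:ℝ) 1, HasDerivWithinAt P (P' s) (Icc (0:ℝ) 1) s)
    (hP'_cont : ContinuousOn P' (Icc (0:ℝ) 1))
    (hUA0 : UA 0 = 1)
    (hUA_deriv : ∀ s ∈ Icc (0:ℝ) 1,
      HasDerivWithinAt UA ((P' s * P s - P s * P' s) * UA s) (Icc (0:ℝ) 1) s) :
    ∀ s ∈ Icc (0:ℝ) 1, UA s * P 0 = P s * UA s :=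
  stmt_4_general P P' UA hP_idem hP_deriv hP'_cont hUA0 hUA_deriv
end

section
/- (Theorem III.1: adiabatic theorem for the Friedrichs model with a bound state at threshold.) Let f ∈ L²([0,1], μ_d) be such that g(k) = i k^{−1} f(k) also belongs to L²([0,1], μ_d). Set V(s) = exp(i s σ(f)), H(s) = V(s) H_F V(s)*, P(s) = V(s) P₀ V(s)*, where P₀(β,u) = (β,0). For τ > 0, let U_τ : [0,1] → B(𝓗) be differentiable with U_τ(0) = 1, each U_τ(s) unitary, satisfying i U_τ'(s) = τ H(s) U_τ(s), and let U_A : [0,1] → B(𝓗) be differentiable with U_A(0) = 1, each U_A(s) unitary, satisfying U_A'(s) = [P'(s), P(s)] U_A(s). Then there is a constant C, depending only on ‖f‖_{L²(μ_d)} and ‖g‖_{L²(μ_d)}, such that for all τ ≥ 1 and all s ∈ [0,1], ‖(U_τ(s) − U_A(s)) P(0)‖ ≤ C/τ. -/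
set_option maxHeartbeats 1000000
set_option synthInstance.maxHeartbeats 1000000

open MeasureTheory Set ContinuousLinearMap NormedSpace

/-- The measure `μ_d = k^{d-1} dk` on `[0,1] ⊆ ℝ`. -/
noncomputable def muF (d : ℝ) : Measure ℝ :=
  (volume.restrict (Set.Icc (0:ℝ) 1)).withDensity fun k => ENNReal.ofReal (k ^ (d - 1))

/-- The Hilbert space `𝓗 = ℂ ⊕ L²([0,1], μ_d)` of the Friedrichs model. -/
noncomputable abbrev HFSpace (d : ℝ) := WithLp 2 (ℂ × Lp ℂ 2 (muF d))

/-- The vector `(β, u) ∈ 𝓗`. -/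
noncomputable def mkH (d : ℝ) (β : ℂ) (u : Lp ℂ 2 (muF d)) : HFSpace d :=
  (WithLp.equiv 2 (ℂ × Lp ℂ 2 (muF d))).symm (β, u)

/-- The rotation `V(s) = exp(i s σ(f))`, given the operator `Sf = σ(f)`. -/
noncomputable def VF (d : ℝ) (Sf : HFSpace d →L[ℂ] HFSpace d) (s : ℝ) :
    HFSpace d →L[ℂ] HFSpace d :=
  NormedSpace.exp (((s : ℂ) * Complex.I) • Sf)

section helpers

lemma icc_mem_nhdsWithin_Ici {t : ℝ} (ht : t ∈ Ico (0:ℝ) 1) :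
    Icc (0:ℝ) 1 ∈ nhdsWithin t (Ici t) := by
  rw [mem_nhdsWithin]
  exact ⟨Iio 1, isOpen_Iio, ht.2, fun x hx => ⟨le_trans ht.1 hx.2, le_of_lt hx.1⟩⟩

lemma gronwall_zero {E : Type*} [NormedAddCommGroup E] [NormedSpace ℂ E]
    (K : ℝ → E →L[ℂ] E) (M : ℝ)
    (hK : ∀ t ∈ Icc (0:ℝ) 1, ‖K t‖ ≤ M)
    (y z : ℝ → E)
    (hy : ∀ t ∈ Icc (0:ℝ) 1, HasDerivWithinAt y (K t (y t)) (Icc (0:ℝ) 1) t)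
    (hz : ∀ t ∈ Icc (0:ℝ) 1, HasDerivWithinAt z (K t (z t)) (Icc (0:ℝ) 1) t)
    (h0 : y 0 = z 0) : ∀ t ∈ Icc (0:ℝ) 1, y t = z t := by
  set D : ℝ → E := fun t => y t - z t with hD
  have hDd : ∀ t ∈ Icc (0:ℝ) 1, HasDerivWithinAt D (K t (D t)) (Icc (0:ℝ) 1) t := by
    intro t ht
    have := (hy t ht).sub (hz t ht)
    simp only [hD, map_sub]
    exact this
  have hcont : ContinuousOn D (Icc (0:ℝ) 1) := fun t ht => (hDd t ht).continuousWithinAt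
  have key : ∀ t ∈ Icc (0:ℝ) 1, ‖D t‖ ≤ gronwallBound 0 M 0 (t - 0) := by
    apply norm_le_gronwallBound_of_norm_deriv_right_le hcont
    · intro t ht
      exact (hDd t (Ico_subset_Icc_self ht)).mono_of_mem_nhdsWithin (icc_mem_nhdsWithin_Ici ht)
    · simp [hD, h0]
    · intro t ht
      calc ‖K t (D t)‖ ≤ ‖K t‖ * ‖D t‖ := (K t).le_opNorm _
        _ ≤ M * ‖D t‖ + 0 := by
            have := mul_le_mul_of_nonneg_right (hK t (Ico_subset_Icc_self ht)) (norm_nonneg (D t))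
            linarith
  intro t ht
  have := key t ht
  rw [gronwallBound_ε0_δ0] at this
  have : D t = 0 := norm_le_zero_iff.mp this
  exact sub_eq_zero.mp this

lemma HasDerivWithinAt.clm_applyC {E F : Type*} [NormedAddCommGroup E] [NormedSpace ℂ E]
    [NormedAddCommGroup F] [NormedSpace ℂ F]
    {c : ℝ → E →L[ℂ] F} {c' : E →L[ℂ] F} {u : ℝ → E} {u' : E} {s : Set ℝ} {x : ℝ}
    (hc : HasDerivWithinAt c c' s x) (hu : HasDerivWithinAt u u' s x) :
    HasDerivWithinAt (fun y => c y (u y)) (c' (u x) + c x u') s x := by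
  have hcR : HasDerivWithinAt (fun y => (c y).restrictScalars ℝ)
      (c'.restrictScalars ℝ) s x := by
    have := (hasDerivWithinAt_const x s
      (ContinuousLinearMap.restrictScalarsL ℂ E F ℝ ℝ)).clm_apply hc
    simpa using this
  have := hcR.clm_apply hu
  simpa using this


lemma adiabatic_est {E : Type*} [NormedAddCommGroup E] [InnerProductSpace ℂ E] [CompleteSpace E]
    (τ : ℝ) (hτ : 1 ≤ τ)
    (Hs Uτ Uτ' : ℝ → E →L[ℂ] E) (ψ γv γv' : ℝ → E) (Mγ Mγ' : ℝ)
    (hU0 : Uτ 0 = 1)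
    (hUmem : ∀ s ∈ Icc (0:ℝ) 1, Uτ s ∈ unitary (E →L[ℂ] E))
    (hUd : ∀ s ∈ Icc (0:ℝ) 1, HasDerivWithinAt Uτ (Uτ' s) (Icc (0:ℝ) 1) s)
    (hUeq : ∀ s ∈ Icc (0:ℝ) 1, Uτ' s = (-(Complex.I) * τ) • (Hs s * Uτ s))
    (hψd : ∀ s ∈ Icc (0:ℝ) 1, HasDerivWithinAt ψ (Hs s (γv s)) (Icc (0:ℝ) 1) s)
    (hHψ : ∀ s ∈ Icc (0:ℝ) 1, Hs s (ψ s) = 0)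
    (hγd : ∀ s ∈ Icc (0:ℝ) 1, HasDerivWithinAt γv (γv' s) (Icc (0:ℝ) 1) s)
    (hMγ : ∀ s ∈ Icc (0:ℝ) 1, ‖γv s‖ ≤ Mγ)
    (hMγ' : ∀ s ∈ Icc (0:ℝ) 1, ‖γv' s‖ ≤ Mγ') :
    ∀ s ∈ Icc (0:ℝ) 1, ‖Uτ s (ψ 0) - ψ s‖ ≤ (Mγ' + 2*Mγ)/τ := by
  have hτ0 : (0:ℝ) < τ := lt_of_lt_of_le one_pos hτ
  have hUst : ∀ s ∈ Icc (0:ℝ) 1,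
      star (Uτ s) * Uτ s = 1 ∧ Uτ s * star (Uτ s) = 1 :=
    fun s hs => Unitary.mem_iff.mp (hUmem s hs)
  -- star of derivative identity
  have hstar' : ∀ t ∈ Icc (0:ℝ) 1,
      star (Uτ' t) = -(star (Uτ t) * Uτ' t * star (Uτ t)) := by
    intro t ht
    have hGd : HasDerivWithinAt (fun u => Uτ u * star (Uτ u))
        (Uτ' t * star (Uτ t) + Uτ t * star (Uτ' t)) (Icc (0:ℝ) 1) t :=
      (hUd t ht).mul (hUd t ht).star
    have hGd0 : HasDerivWithinAt (fun u => Uτ u * star (Uτ u))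
        (0 : E →L[ℂ] E) (Icc (0:ℝ) 1) t := by
      have hc : HasDerivWithinAt (fun _ : ℝ => (1 : E →L[ℂ] E)) 0 (Icc (0:ℝ) 1) t :=
        hasDerivWithinAt_const _ _ _
      exact hc.congr (fun u hu => ((hUst u hu).2).symm ▸ rfl) ((hUst t ht).2)
    have hud : UniqueDiffWithinAt ℝ (Icc (0:ℝ) 1) t := (uniqueDiffOn_Icc one_pos) t ht
    have heq : Uτ' t * star (Uτ t) + Uτ t * star (Uτ' t) = 0 :=
      (hGd.derivWithin hud).symm.trans (hGd0.derivWithin hud)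
    have h2 : Uτ t * star (Uτ' t) = -(Uτ' t * star (Uτ t)) := by
      rw [eq_neg_iff_add_eq_zero, add_comm]; exact heq
    calc star (Uτ' t) = (star (Uτ t) * Uτ t) * star (Uτ' t) := by rw [(hUst t ht).1, one_mul]
      _ = star (Uτ t) * (Uτ t * star (Uτ' t)) := by rw [mul_assoc]
      _ = star (Uτ t) * (-(Uτ' t * star (Uτ t))) := by rw [h2]
      _ = -(star (Uτ t) * Uτ' t * star (Uτ t)) := by noncomm_ring
  set c : ℂ := ((τ:ℂ))⁻¹ * Complex.I with hc
  set q : ℝ → E := fun t => star (Uτ t) (ψ t) with hq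
  set w : ℝ → E := fun t => star (Uτ t) (γv t) with hw
  set Q : ℝ → E := fun t => q t + c • w t with hQ
  have hτC : ((τ:ℂ)) ≠ 0 := by exact_mod_cast ne_of_gt hτ0
  -- derivative of q
  have hqd : ∀ t ∈ Icc (0:ℝ) 1,
      HasDerivWithinAt q ((-c) • (star (Uτ' t) (γv t))) (Icc (0:ℝ) 1) t := by
    intro t ht
    have h1' := HasDerivWithinAt.clm_applyC (hUd t ht).star (hψd t ht)
    have h1 : HasDerivWithinAt q
        (star (Uτ' t) (ψ t) + star (Uτ t) (Hs t (γv t))) (Icc (0:ℝ) 1) t := h1'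
    have idA : star (Uτ' t) (ψ t) = 0 := by
      rw [hstar' t ht]
      have : Uτ' t (star (Uτ t) (ψ t)) = 0 := by
        rw [hUeq t ht]
        have : (Hs t * Uτ t) (star (Uτ t) (ψ t)) = 0 := by
          have h3 : Uτ t (star (Uτ t) (ψ t)) = ψ t := by
            have := congrArg (fun (A : E →L[ℂ] E) => A (ψ t)) (hUst t ht).2
            simpa [ContinuousLinearMap.mul_apply] using this
          simp [ContinuousLinearMap.mul_apply, h3, hHψ t ht]
        simp [smul_apply, this]
      simp [ContinuousLinearMap.mul_apply, neg_apply, this]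
    have idB : star (Uτ t) (Hs t (γv t)) = (-c) • (star (Uτ' t) (γv t)) := by
      have hH : Hs t (γv t) = ((-(Complex.I) * τ)⁻¹) • Uτ' t (star (Uτ t) (γv t)) := by
        rw [hUeq t ht]
        have h3 : Uτ t (star (Uτ t) (γv t)) = γv t := by
          have := congrArg (fun (A : E →L[ℂ] E) => A (γv t)) (hUst t ht).2
          simpa [ContinuousLinearMap.mul_apply] using this
        rw [smul_apply, smul_smul, inv_mul_cancel₀ (by simp [hτC, Complex.I_ne_zero]), one_smul]
        simp [ContinuousLinearMap.mul_apply, h3]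
      rw [hH, _root_.map_smul]
      have h4 : star (Uτ t) (Uτ' t (star (Uτ t) (γv t))) = - (star (Uτ' t) (γv t)) := by
        have := congrArg (fun (A : E →L[ℂ] E) => A (γv t)) (hstar' t ht)
        simp only [neg_apply, ContinuousLinearMap.mul_apply] at this
        rw [this, neg_neg]
      rw [h4, smul_neg, ← neg_smul]
      have hinv : (-Complex.I * (τ:ℂ))⁻¹ = c := by
        rw [hc]
        apply inv_eq_of_mul_eq_one_right
        have he : (-Complex.I * (τ:ℂ)) * ((τ:ℂ)⁻¹ * Complex.I) =
            -(Complex.I*Complex.I) * ((τ:ℂ) * (τ:ℂ)⁻¹) := by ring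
        rw [he, Complex.I_mul_I, mul_inv_cancel₀ hτC]; ring
      rw [hinv]
    rw [idA, idB] at h1
    simpa using h1
  -- derivative of Q and bound
  have hQd : ∀ t ∈ Icc (0:ℝ) 1,
      HasDerivWithinAt Q (c • (star (Uτ t) (γv' t))) (Icc (0:ℝ) 1) t := by
    intro t ht
    have hwd' := HasDerivWithinAt.clm_applyC (hUd t ht).star (hγd t ht)
    have hwd : HasDerivWithinAt w
        (star (Uτ' t) (γv t) + star (Uτ t) (γv' t)) (Icc (0:ℝ) 1) t := hwd'
    have := (hqd t ht).add (hwd.const_smul c)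
    convert this using 1
    · rfl
    rw [smul_add]
    module
  have hnormc : ‖c‖ = τ⁻¹ := by
    simp [hc, norm_mul]
    positivity
  have hQbound : ∀ t ∈ Icc (0:ℝ) 1, ‖c • (star (Uτ t) (γv' t))‖ ≤ τ⁻¹ * Mγ' := by
    intro t ht
    rw [norm_smul, hnormc]
    have hiso : ‖(star (Uτ t)) (γv' t)‖ = ‖γv' t‖ :=
      (star (Uτ t)).norm_map_of_mem_unitary (Unitary.star_mem (hUmem t ht)) _
    rw [hiso]
    exact mul_le_mul_of_nonneg_left (hMγ' t ht) (by positivity)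
  -- mean value
  intro s hs
  have hMV : ‖Q s - Q 0‖ ≤ (τ⁻¹ * Mγ') * ‖s - 0‖ :=
    (convex_Icc (0:ℝ) 1).norm_image_sub_le_of_norm_hasDerivWithin_le hQd hQbound
      (by constructor <;> norm_num) hs
  have hs1 : ‖s - (0:ℝ)‖ ≤ 1 := by
    rw [sub_zero, Real.norm_eq_abs, abs_of_nonneg hs.1]; exact hs.2
  have hMγ'0 : 0 ≤ Mγ' := le_trans (norm_nonneg _) (hMγ' 0 (by constructor <;> norm_num))
  have hMγ0 : 0 ≤ Mγ := le_trans (norm_nonneg _) (hMγ 0 (by constructor <;> norm_num))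
  have hQ01 : ‖Q s - Q 0‖ ≤ τ⁻¹ * Mγ' := by
    calc ‖Q s - Q 0‖ ≤ (τ⁻¹ * Mγ') * ‖s - 0‖ := hMV
      _ ≤ (τ⁻¹ * Mγ') * 1 := by
          apply mul_le_mul_of_nonneg_left hs1 (by positivity)
      _ = τ⁻¹ * Mγ' := mul_one _
  -- assemble
  have hq0 : q 0 = ψ 0 := by simp [hq, hU0]
  have hqs : Uτ s (q s) = ψ s := by
    have := congrArg (fun (A : E →L[ℂ] E) => A (ψ s)) (hUst s hs).2
    simpa [hq, ContinuousLinearMap.mul_apply] using this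
  have hiso : ∀ x : E, ‖Uτ s x‖ = ‖x‖ :=
    fun x => (Uτ s).norm_map_of_mem_unitary (hUmem s hs) x
  have key : Uτ s (ψ 0) - ψ s = Uτ s (q 0 - q s) := by
    rw [map_sub, hq0, hqs]
  rw [key, hiso]
  have hwn : ∀ t ∈ Icc (0:ℝ) 1, ‖w t‖ ≤ Mγ := by
    intro t ht
    have : ‖(star (Uτ t)) (γv t)‖ = ‖γv t‖ :=
      (star (Uτ t)).norm_map_of_mem_unitary (Unitary.star_mem (hUmem t ht)) _
    rw [hw]; simp only []; rw [this]; exact hMγ t ht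
  have hdecomp : q 0 - q s = (Q 0 - Q s) - c • (w 0 - w s) := by
    simp [hQ, smul_sub]; abel
  calc ‖q 0 - q s‖ = ‖(Q 0 - Q s) - c • (w 0 - w s)‖ := by rw [hdecomp]
    _ ≤ ‖Q 0 - Q s‖ + ‖c • (w 0 - w s)‖ := norm_sub_le _ _
    _ ≤ τ⁻¹ * Mγ' + τ⁻¹ * (Mγ + Mγ) := by
        gcongr
        · rw [← norm_neg, neg_sub]; exact hQ01
        · rw [norm_smul, hnormc]
          have : ‖w 0 - w s‖ ≤ Mγ + Mγ :=
            le_trans (norm_sub_le _ _)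
              (add_le_add (hwn 0 (by constructor <;> norm_num)) (hwn s hs))
          exact mul_le_mul_of_nonneg_left this (by positivity)
    _ = (Mγ' + 2*Mγ)/τ := by field_simp; ring

lemma helper_mul_neg {E : Type*} [NormedAddCommGroup E] [NormedSpace ℂ E]
    (a b c w : E →L[ℂ] E) : a * (b * (c * -w)) = -(a * (b * (c * w))) := by
  rw [mul_neg, mul_neg, mul_neg]

end helpers

section model
variable {d : ℝ}

lemma mkH_fst (β : ℂ) (u : Lp ℂ 2 (muF d)) : (mkH d β u).fst = β := rfl
lemma mkH_snd (β : ℂ) (u : Lp ℂ 2 (muF d)) : (mkH d β u).snd = u := rfl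
lemma mkH_eta (x : HFSpace d) : mkH d x.fst x.snd = x := rfl
lemma mkH_smul (c β : ℂ) (u : Lp ℂ 2 (muF d)) : c • mkH d β u = mkH d (c*β) (c • u) := by
  have : c • mkH d β u = mkH d (c • β) (c • u) := rfl
  rw [this, smul_eq_mul]
lemma mkH_zero : mkH d 0 0 = (0 : HFSpace d) := rfl
lemma fst_norm_le (x : HFSpace d) : ‖x.fst‖ ≤ ‖x‖ := by
  rw [WithLp.prod_norm_eq_of_L2]
  have := norm_nonneg x.snd
  nlinarith [Real.sq_sqrt (by positivity : (0:ℝ) ≤ ‖x.fst‖^2 + ‖x.snd‖^2),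
    Real.sqrt_nonneg (‖x.fst‖^2 + ‖x.snd‖^2), norm_nonneg x.fst]

end model

section stmtproof

variable (d : ℝ) (f g : Lp ℂ 2 (muF d)) (Sf : HFSpace d →L[ℂ] HFSpace d)

-- Self-adjointness of Sf
lemma Sf_selfadjoint
    (hSf : ∀ (β : ℂ) (u : Lp ℂ 2 (muF d)),
      Sf (mkH d β u) = mkH d (@inner ℂ _ _ f u) (β • f)) :
    star Sf = Sf := by
  have key : ∀ x y : HFSpace d, (inner ℂ (Sf x) y : ℂ) = inner ℂ x (Sf y) := by
    intro x y
    have hx : Sf x = mkH d (@inner ℂ _ _ f x.snd) (x.fst • f) := by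
      conv_lhs => rw [← mkH_eta x]
      rw [hSf]
    have hy : Sf y = mkH d (@inner ℂ _ _ f y.snd) (y.fst • f) := by
      conv_lhs => rw [← mkH_eta y]
      rw [hSf]
    rw [hx, hy, WithLp.prod_inner_apply, WithLp.prod_inner_apply]
    simp only [WithLp.ofLp_fst, WithLp.ofLp_snd]
    rw [mkH_fst, mkH_snd, mkH_fst, mkH_snd]
    simp only [RCLike.inner_apply, inner_smul_left, inner_smul_right, inner_conj_symm]
    ring
  rw [ContinuousLinearMap.star_eq_adjoint]
  exact ((ContinuousLinearMap.eq_adjoint_iff Sf Sf).mpr key).symm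

end stmtproof

section Vlemmas
variable {d : ℝ} (Sf : HFSpace d →L[ℂ] HFSpace d)

lemma VF_smul_eq (s : ℝ) :
    ((s : ℂ) * Complex.I) • Sf = s • (Complex.I • Sf) := by
  rw [← algebraMap_smul ℂ s (Complex.I • Sf), Complex.coe_algebraMap, smul_smul]

lemma VF_mul (s t : ℝ) : VF d Sf s * VF d Sf t = VF d Sf (s+t) := by
  letI : NormedAlgebra ℚ (HFSpace d →L[ℂ] HFSpace d) := NormedAlgebra.restrictScalars ℚ ℂ _
  unfold VF
  rw [← NormedSpace.exp_add_of_commute]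
  · congr 1
    push_cast
    module
  · exact ((Commute.refl Sf).smul_left _).smul_right _

lemma VF_zero : VF d Sf 0 = 1 := by
  unfold VF
  rw [show ((0:ℝ):ℂ) * Complex.I = 0 by simp, zero_smul ℂ Sf, NormedSpace.exp_zero]

lemma VF_star (h : star Sf = Sf) (s : ℝ) : star (VF d Sf s) = VF d Sf (-s) := by
  unfold VF
  rw [star_exp, star_smul, h]
  congr 1
  rw [show star ((s:ℂ) * Complex.I) = ((-s:ℝ):ℂ) * Complex.I by
    rw [show star ((s:ℂ) * Complex.I) = (starRingEnd ℂ) ((s:ℂ) * Complex.I) from rfl]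
    push_cast
    simp [Complex.conj_ofReal, Complex.conj_I]]

lemma VF_unitary (h : star Sf = Sf) (s : ℝ) :
    VF d Sf s ∈ unitary (HFSpace d →L[ℂ] HFSpace d) := by
  rw [Unitary.mem_iff, VF_star Sf h, VF_mul, VF_mul]
  constructor
  · rw [neg_add_cancel, VF_zero]
  · rw [add_neg_cancel, VF_zero]

lemma VF_comm (s : ℝ) : Commute Sf (VF d Sf s) :=
  (((Commute.refl Sf).smul_right _) : Commute Sf (((s : ℂ) * Complex.I) • Sf)).exp_right

lemma VF_deriv (s : ℝ) :
    HasDerivAt (fun t => VF d Sf t) ((Complex.I • Sf) * VF d Sf s) s := by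
  have heq : (fun t : ℝ => VF d Sf t) = fun t : ℝ => NormedSpace.exp (t • (Complex.I • Sf)) := by
    funext t
    unfold VF
    rw [VF_smul_eq]
  have hd := hasDerivAt_exp_smul_const' (𝕂 := ℝ) (Complex.I • Sf) s
  have hVs : VF d Sf s = NormedSpace.exp (s • (Complex.I • Sf)) := congrFun heq s
  rw [heq, hVs]
  exact hd

end Vlemmas

/-- **Theorem III.1: adiabatic theorem for the Friedrichs model with a
bound state at threshold.** Fix `d > 0`. Let `f ∈ L²([0,1], μ_d)` be such that
`g(k) = i k⁻¹ f(k)` (i.e. `k g(k) = i f(k)` a.e.) is also in `L²([0,1], μ_d)`. Let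
`H_F(β,u) = (0, k u(k))` be the Friedrichs Hamiltonian, `σ(f)(β,u) = (⟨f,u⟩, β f)`,
`P₀(β,u) = (β,0)`, and set `V(s) = exp(i s σ(f))`, `H(s) = V(s) H_F V(s)*`,
`P(s) = V(s) P₀ V(s)*`. Then there is a constant `C` (depending only on `‖f‖` and
`‖g‖`) such that for every `τ ≥ 1`, every Schrödinger evolution `U_τ`
(`i U_τ' = τ H(s) U_τ`, `U_τ(0) = 1`, unitary) and every Kato adiabatic evolution `U_A`
(`U_A' = [P'(s), P(s)] U_A`, `U_A(0) = 1`, unitary), one has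
`‖(U_τ(s) − U_A(s)) P(0)‖ ≤ C/τ` for all `s ∈ [0,1]`. -/
theorem stmt_11 (d : ℝ) (hd : 0 < d)
    (f g : Lp ℂ 2 (muF d))
    (hfg : ∀ᵐ (k : ℝ) ∂(muF d), (k : ℂ) * g k = Complex.I * f k)
    (HF Sf P₀ : HFSpace d →L[ℂ] HFSpace d)
    (hHF : ∀ (β : ℂ) (u v : Lp ℂ 2 (muF d)),
      (⇑v =ᵐ[muF d] fun k : ℝ => (k : ℂ) * u k) → HF (mkH d β u) = mkH d 0 v)
    (hSf : ∀ (β : ℂ) (u : Lp ℂ 2 (muF d)),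
      Sf (mkH d β u) = mkH d (@inner ℂ _ _ f u) (β • f))
    (hP₀ : ∀ (β : ℂ) (u : Lp ℂ 2 (muF d)), P₀ (mkH d β u) = mkH d β 0) :
    ∃ C : ℝ, ∀ τ : ℝ, 1 ≤ τ →
      ∀ Uτ Uτ' UA P' : ℝ → HFSpace d →L[ℂ] HFSpace d,
        (∀ s ∈ Icc (0:ℝ) 1,
          HasDerivWithinAt (fun t => VF d Sf t * P₀ * star (VF d Sf t)) (P' s)
            (Icc (0:ℝ) 1) s) →
        Uτ 0 = 1 →
        (∀ s ∈ Icc (0:ℝ) 1, Uτ s ∈ unitary (HFSpace d →L[ℂ] HFSpace d)) →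
        (∀ s ∈ Icc (0:ℝ) 1, HasDerivWithinAt Uτ (Uτ' s) (Icc (0:ℝ) 1) s) →
        (∀ s ∈ Icc (0:ℝ) 1,
          Complex.I • Uτ' s =
            (τ : ℂ) • ((VF d Sf s * HF * star (VF d Sf s)) * Uτ s)) →
        UA 0 = 1 →
        (∀ s ∈ Icc (0:ℝ) 1, UA s ∈ unitary (HFSpace d →L[ℂ] HFSpace d)) →
        (∀ s ∈ Icc (0:ℝ) 1,
          HasDerivWithinAt UA
            ((P' s * (VF d Sf s * P₀ * star (VF d Sf s)) -
              (VF d Sf s * P₀ * star (VF d Sf s)) * P' s) * UA s)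
            (Icc (0:ℝ) 1) s) →
        ∀ s ∈ Icc (0:ℝ) 1,
          ‖(Uτ s - UA s) * (VF d Sf 0 * P₀ * star (VF d Sf 0))‖ ≤ C / τ := by
  classical
  set e0 : HFSpace d := mkH d 1 0 with he0
  set f1 : HFSpace d := mkH d 0 f with hf1
  set γ : HFSpace d := mkH d 0 g with hγdef
  set A : HFSpace d →L[ℂ] HFSpace d := Complex.I • Sf with hA
  have hstarSf : star Sf = Sf := Sf_selfadjoint d f Sf hSf
  -- model facts
  have hSfe0 : Sf e0 = f1 := by
    rw [he0, hSf, inner_zero_right, one_smul, hf1]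
  have hHFe0 : HF e0 = 0 := by
    have h0 : (⇑(0 : Lp ℂ 2 (muF d)) =ᵐ[muF d]
        fun k : ℝ => (k:ℂ) * (0 : Lp ℂ 2 (muF d)) k) := by
      filter_upwards [Lp.coeFn_zero ℂ 2 (muF d)] with k hk
      rw [hk]
      simp
    rw [he0, hHF 1 0 0 h0, mkH_zero]
  have hHFγ : HF γ = Complex.I • f1 := by
    have hv : (⇑(Complex.I • f) =ᵐ[muF d] fun k : ℝ => (k:ℂ) * g k) := by
      filter_upwards [Lp.coeFn_smul Complex.I f, hfg] with k h1 h2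
      rw [h1, Pi.smul_apply, smul_eq_mul, h2]
    rw [hγdef, hHF 0 g (Complex.I • f) hv, hf1, mkH_smul, mul_zero]
  have hP₀e0 : P₀ e0 = e0 := by rw [he0, hP₀]
  have hP₀f1 : P₀ f1 = 0 := by rw [hf1, hP₀, mkH_zero]
  have hP₀x : ∀ x : HFSpace d, P₀ x = x.fst • e0 := by
    intro x
    conv_lhs => rw [← mkH_eta x]
    rw [hP₀, he0, mkH_smul, mul_one, smul_zero]
  -- V facts
  have hstarV : ∀ s : ℝ, star (VF d Sf s) = VF d Sf (-s) := VF_star Sf hstarSf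
  have hVunit : ∀ s : ℝ, VF d Sf s ∈ unitary (HFSpace d →L[ℂ] HFSpace d) :=
    VF_unitary Sf hstarSf
  have hVsV : ∀ s : ℝ, star (VF d Sf s) * VF d Sf s = 1 := by
    intro s
    rw [hstarV, VF_mul, neg_add_cancel, VF_zero]
  have hVVx : ∀ (s : ℝ) (x : HFSpace d), star (VF d Sf s) (VF d Sf s x) = x := by
    intro s x
    have := congrArg (fun T : HFSpace d →L[ℂ] HFSpace d => T x) (hVsV s)
    simpa [ContinuousLinearMap.mul_apply] using this
  have hSfV : ∀ (s : ℝ) (x : HFSpace d), Sf (VF d Sf s x) = VF d Sf s (Sf x) := by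
    intro s x
    have := congrArg (fun T : HFSpace d →L[ℂ] HFSpace d => T x) (VF_comm Sf s)
    simpa [ContinuousLinearMap.mul_apply] using this
  have hVnorm : ∀ (s : ℝ) (x : HFSpace d), ‖VF d Sf s x‖ = ‖x‖ := by
    intro s x
    exact (VF d Sf s).norm_map_of_mem_unitary (hVunit s) x
  have hnormA : ‖A‖ = ‖Sf‖ := by
    rw [hA, norm_smul Complex.I Sf, Complex.norm_I, one_mul]
  have hstarA : star A = -A := by
    rw [hA, star_smul, hstarSf, Complex.star_def, Complex.conj_I]
    module
  -- ψ and γv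
  set ψ : ℝ → HFSpace d := fun s => VF d Sf s e0 with hψdef
  set γv : ℝ → HFSpace d := fun s => VF d Sf s γ with hγvdef
  have hψ0 : ψ 0 = e0 := by
    rw [hψdef]
    simp only []
    rw [VF_zero]
    exact ContinuousLinearMap.one_apply e0
  have hHsψ : ∀ s : ℝ, (VF d Sf s * HF * star (VF d Sf s)) (ψ s) = 0 := by
    intro s
    simp only [ContinuousLinearMap.mul_apply, hψdef]
    rw [hVVx, hHFe0, map_zero]
  have hAψ : ∀ s : ℝ, A (ψ s) = Complex.I • VF d Sf s f1 := by
    intro s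
    rw [hA, smul_apply, hψdef]
    simp only []
    rw [hSfV, hSfe0]
  have hAψH : ∀ s : ℝ,
      (A * VF d Sf s) e0 = (VF d Sf s * HF * star (VF d Sf s)) (γv s) := by
    intro s
    have h1 : (A * VF d Sf s) e0 = A (ψ s) := by rw [ContinuousLinearMap.mul_apply, hψdef]
    rw [h1, hAψ]
    simp only [ContinuousLinearMap.mul_apply, hγvdef]
    rw [hVVx, hHFγ, _root_.map_smul]
  -- derivative of ψ and γv
  have hψd : ∀ s ∈ Icc (0:ℝ) 1,
      HasDerivWithinAt ψ ((A * VF d Sf s) e0) (Icc (0:ℝ) 1) s := by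
    intro s _
    have hbase : HasDerivWithinAt (fun t => VF d Sf t) (A * VF d Sf s) (Icc (0:ℝ) 1) s :=
      (VF_deriv Sf s).hasDerivWithinAt
    have := HasDerivWithinAt.clm_applyC hbase
      (hasDerivWithinAt_const s (Icc (0:ℝ) 1) e0)
    rw [map_zero, add_zero] at this
    exact this
  have hγvd : ∀ s ∈ Icc (0:ℝ) 1,
      HasDerivWithinAt γv ((A * VF d Sf s) γ) (Icc (0:ℝ) 1) s := by
    intro s _
    have hbase : HasDerivWithinAt (fun t => VF d Sf t) (A * VF d Sf s) (Icc (0:ℝ) 1) s :=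
      (VF_deriv Sf s).hasDerivWithinAt
    have := HasDerivWithinAt.clm_applyC hbase
      (hasDerivWithinAt_const s (Icc (0:ℝ) 1) γ)
    rw [map_zero, add_zero] at this
    exact this
  -- the constant
  refine ⟨‖Sf‖ * ‖γ‖ + 2 * ‖γ‖, ?_⟩
  intro τ hτ Uτ Uτ' UA P' hPd hUτ0 hUτu hUτd hSch hUA0 hUAu hUAd
  have hτ0 : (0:ℝ) < τ := lt_of_lt_of_le one_pos hτ
  -- P' identification
  set Ps : ℝ → HFSpace d →L[ℂ] HFSpace d :=
    fun s => VF d Sf s * P₀ * star (VF d Sf s) with hPsdef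
  have hP'id : ∀ s ∈ Icc (0:ℝ) 1, P' s = A * Ps s - Ps s * A := by
    intro s hs
    have hud : UniqueDiffWithinAt ℝ (Icc (0:ℝ) 1) s := (uniqueDiffOn_Icc one_pos) s hs
    have hd1 : HasDerivWithinAt (fun t => VF d Sf t * P₀ * star (VF d Sf t))
        ((A * VF d Sf s * P₀) * star (VF d Sf s) + (VF d Sf s * P₀) * star (A * VF d Sf s))
        (Icc (0:ℝ) 1) s := by
      have hbase : HasDerivWithinAt (fun t => VF d Sf t) (A * VF d Sf s) (Icc (0:ℝ) 1) s :=
        (VF_deriv Sf s).hasDerivWithinAt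
      haveI : StarModule ℝ (HFSpace d →L[ℂ] HFSpace d) := ⟨fun r T => by
        have h : ∀ S : HFSpace d →L[ℂ] HFSpace d, r • S = (r:ℂ) • S := fun S => by
          ext x; exact RCLike.real_smul_eq_coe_smul (K := ℂ) r (S x)
        rw [show star r = r from star_trivial r, h, h, star_smul, Complex.star_def, Complex.conj_ofReal]⟩
      exact (hbase.mul_const P₀).mul hbase.star
    have heq : P' s = (A * VF d Sf s * P₀) * star (VF d Sf s)
        + (VF d Sf s * P₀) * star (A * VF d Sf s) :=
      ((hPd s hs).derivWithin hud).symm.trans (hd1.derivWithin hud)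
    rw [heq, star_mul, hstarA]
    simp only [hPsdef, sub_eq_add_neg, mul_assoc]
    congr 1
    exact helper_mul_neg _ _ _ _
  -- UA e0 = ψ via Gronwall
  have hPψ : ∀ s : ℝ, Ps s (ψ s) = ψ s := by
    intro s
    rw [hPsdef]
    simp only [ContinuousLinearMap.mul_apply, hψdef]
    rw [hVVx, hP₀e0]
  have hPAψ : ∀ s : ℝ, Ps s (A (ψ s)) = 0 := by
    intro s
    rw [hAψ, hPsdef]
    simp only [ContinuousLinearMap.mul_apply, _root_.map_smul, hVVx, hP₀f1, smul_zero, map_zero]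
  have hKψ : ∀ s ∈ Icc (0:ℝ) 1,
      (P' s * Ps s - Ps s * P' s) (ψ s) = (A * VF d Sf s) e0 := by
    intro s hs
    have hP'ψ : P' s (ψ s) = A (ψ s) := by
      rw [hP'id s hs]
      simp only [sub_apply, ContinuousLinearMap.mul_apply]
      rw [hPψ, hPAψ, sub_zero]
    simp only [sub_apply, ContinuousLinearMap.mul_apply]
    rw [hPψ, hP'ψ, hPAψ, sub_zero]
  have hVopnorm : ∀ s : ℝ, ‖VF d Sf s‖ ≤ 1 := by
    intro s
    refine opNorm_le_bound _ zero_le_one (fun x => ?_)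
    rw [hVnorm, one_mul]
  have hPsnorm : ∀ s : ℝ, ‖Ps s‖ ≤ ‖P₀‖ := by
    intro s
    rw [hPsdef]
    calc ‖VF d Sf s * P₀ * star (VF d Sf s)‖
        ≤ ‖VF d Sf s * P₀‖ * ‖star (VF d Sf s)‖ := norm_mul_le _ _
      _ ≤ ‖VF d Sf s‖ * ‖P₀‖ * ‖star (VF d Sf s)‖ := by
          gcongr; exact norm_mul_le _ _
      _ ≤ 1 * ‖P₀‖ * 1 := by
          gcongr
          · exact hVopnorm s
          · rw [hstarV]; exact hVopnorm _
      _ = ‖P₀‖ := by ring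
  have hP'norm : ∀ s ∈ Icc (0:ℝ) 1, ‖P' s‖ ≤ 2 * ‖Sf‖ * ‖P₀‖ := by
    intro s hs
    rw [hP'id s hs]
    calc ‖A * Ps s - Ps s * A‖ ≤ ‖A * Ps s‖ + ‖Ps s * A‖ := norm_sub_le _ _
      _ ≤ ‖A‖ * ‖Ps s‖ + ‖Ps s‖ * ‖A‖ := add_le_add (norm_mul_le _ _) (norm_mul_le _ _)
      _ ≤ ‖Sf‖ * ‖P₀‖ + ‖P₀‖ * ‖Sf‖ := by
          rw [hnormA]
          gcongr <;> [exact hPsnorm s; exact hPsnorm s] <;> positivity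
      _ = 2 * ‖Sf‖ * ‖P₀‖ := by ring
  have hKnorm : ∀ s ∈ Icc (0:ℝ) 1,
      ‖P' s * Ps s - Ps s * P' s‖ ≤ 2 * (2 * ‖Sf‖ * ‖P₀‖ * ‖P₀‖) := by
    intro s hs
    calc ‖P' s * Ps s - Ps s * P' s‖ ≤ ‖P' s * Ps s‖ + ‖Ps s * P' s‖ := norm_sub_le _ _
      _ ≤ ‖P' s‖ * ‖Ps s‖ + ‖Ps s‖ * ‖P' s‖ := add_le_add (norm_mul_le _ _) (norm_mul_le _ _)
      _ ≤ (2 * ‖Sf‖ * ‖P₀‖) * ‖P₀‖ + ‖P₀‖ * (2 * ‖Sf‖ * ‖P₀‖) := by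
          have h1 := hP'norm s hs
          have h2 := hPsnorm s
          have h3 : (0:ℝ) ≤ ‖Ps s‖ := norm_nonneg _
          have h4 : (0:ℝ) ≤ ‖P' s‖ := norm_nonneg _
          have h5 : (0:ℝ) ≤ ‖P₀‖ := norm_nonneg _
          nlinarith
      _ = 2 * (2 * ‖Sf‖ * ‖P₀‖ * ‖P₀‖) := by ring
  have hUAψ : ∀ t ∈ Icc (0:ℝ) 1, UA t e0 = ψ t := by
    have := gronwall_zero (fun s => P' s * Ps s - Ps s * P' s)
      (2 * (2 * ‖Sf‖ * ‖P₀‖ * ‖P₀‖)) hKnorm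
      (fun t => UA t e0) ψ ?_ ?_ ?_
    · exact this
    · intro t ht
      have := HasDerivWithinAt.clm_applyC (hUAd t ht)
        (hasDerivWithinAt_const t (Icc (0:ℝ) 1) e0)
      simpa [ContinuousLinearMap.mul_apply, hPsdef] using this
    · intro t ht
      have := hψd t ht
      rw [← hKψ t ht] at this
      exact this
    · show UA 0 e0 = ψ 0
      rw [hUA0, hψ0]
      exact ContinuousLinearMap.one_apply e0
  -- apply the main estimate
  have hUeq : ∀ s ∈ Icc (0:ℝ) 1,
      Uτ' s = (-(Complex.I) * τ) •
        ((VF d Sf s * HF * star (VF d Sf s)) * Uτ s) := by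
    intro s hs
    have := congrArg (fun X : HFSpace d →L[ℂ] HFSpace d => (-Complex.I) • X) (hSch s hs)
    simp only [smul_smul] at this
    rw [show -Complex.I * Complex.I = 1 by simp [Complex.I_mul_I], one_smul] at this
    rw [this]
  have hψd' : ∀ s ∈ Icc (0:ℝ) 1,
      HasDerivWithinAt ψ ((VF d Sf s * HF * star (VF d Sf s)) (γv s)) (Icc (0:ℝ) 1) s := by
    intro s hs
    have := hψd s hs
    rwa [hAψH s] at this
  have hMγ : ∀ s ∈ Icc (0:ℝ) 1, ‖γv s‖ ≤ ‖γ‖ := by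
    intro s _
    rw [hγvdef]
    simp only []
    rw [hVnorm]
  have hMγ' : ∀ s ∈ Icc (0:ℝ) 1, ‖(A * VF d Sf s) γ‖ ≤ ‖Sf‖ * ‖γ‖ := by
    intro s _
    rw [ContinuousLinearMap.mul_apply]
    calc ‖A (VF d Sf s γ)‖ ≤ ‖A‖ * ‖VF d Sf s γ‖ := A.le_opNorm _
      _ = ‖Sf‖ * ‖γ‖ := by rw [hnormA, hVnorm]
  have hEst := adiabatic_est τ hτ
    (fun s => VF d Sf s * HF * star (VF d Sf s)) Uτ Uτ' ψ γv
    (fun s => (A * VF d Sf s) γ) ‖γ‖ (‖Sf‖ * ‖γ‖)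
    hUτ0 hUτu hUτd hUeq hψd' (fun s _ => hHsψ s) hγvd hMγ hMγ'
  -- conclude
  intro s hs
  have hP00 : VF d Sf 0 * P₀ * star (VF d Sf 0) = P₀ := by
    rw [VF_zero, star_one, one_mul, mul_one]
  rw [hP00]
  have hC0 : (0:ℝ) ≤ (‖Sf‖ * ‖γ‖ + 2 * ‖γ‖) / τ := by positivity
  refine opNorm_le_bound _ hC0 (fun x => ?_)
  have happ : ((Uτ s - UA s) * P₀) x = x.fst • (Uτ s (ψ 0) - ψ s) := by
    rw [ContinuousLinearMap.mul_apply, sub_apply, hP₀x x, _root_.map_smul, _root_.map_smul, hψ0, ← smul_sub, hUAψ s hs]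
  rw [happ, norm_smul]
  calc ‖x.fst‖ * ‖Uτ s (ψ 0) - ψ s‖
      ≤ ‖x‖ * ((‖Sf‖ * ‖γ‖ + 2 * ‖γ‖) / τ) :=
        mul_le_mul (fst_norm_le x) (hEst s hs) (norm_nonneg _) (norm_nonneg x)
    _ = (‖Sf‖ * ‖γ‖ + 2 * ‖γ‖) / τ * ‖x‖ := by ring
end
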